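/- arXiv:1108.6031 — 9 statements merged into one kernel-verified Lean document; each statement's English description precedes it below -/
import Mathlib

section
/- Let G = diag(g1,g2,g3) with distinct positive constants g1,g2,g3. Define Ψ(R,R_d) = (1/2)tr(G(I - R_dᵀR)) for R, R_d ∈ SO(3). Then Ψ(R,R_d) ≥ 0 for all R, R_d ∈ SO(3), and Ψ(R,R_d) = 0 if and only if R = R_d. -/
open Matrix
noncomputable section
def hat (x : Fin 3 → ℝ) : Matrix (Fin 3) (Fin 3) ℝ :=
  !![0, -x 2, x 1; x 2, 0, -x 0; -x 1, x 0, 0]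
def vee (A : Matrix (Fin 3) (Fin 3) ℝ) : Fin 3 → ℝ := ![A 2 1, A 0 2, A 1 0]
def SO3 (R : Matrix (Fin 3) (Fin 3) ℝ) : Prop := Rᵀ * R = 1 ∧ R.det = 1
def enorm3 (x : Fin 3 → ℝ) : ℝ := Real.sqrt (x ⬝ᵥ x)
def frobNorm {m n : ℕ} (A : Matrix (Fin m) (Fin n) ℝ) : ℝ := Real.sqrt ((Aᵀ * A).trace)
def specNorm {m n : ℕ} (A : Matrix (Fin m) (Fin n) ℝ) : ℝ :=
  ‖LinearMap.toContinuousLinearMap (Matrix.toEuclideanLin A)‖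
def Gmat (g1 g2 g3 : ℝ) : Matrix (Fin 3) (Fin 3) ℝ := Matrix.diagonal ![g1, g2, g3]
def Psi (G R Rd : Matrix (Fin 3) (Fin 3) ℝ) : ℝ := (1/2 : ℝ) * (G * (1 - Rdᵀ * R)).trace
def eRvec (G R Rd : Matrix (Fin 3) (Fin 3) ℝ) : Fin 3 → ℝ :=
  (1/2 : ℝ) • vee (G * Rdᵀ * R - Rᵀ * Rd * G)
def Emat (G R Rd : Matrix (Fin 3) (Fin 3) ℝ) : Matrix (Fin 3) (Fin 3) ℝ :=
  (1/2 : ℝ) • ((Rᵀ * Rd * G).trace • (1 : Matrix (Fin 3) (Fin 3) ℝ) - Rᵀ * Rd * G)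

theorem stmt4 (g1 g2 g3 : ℝ) (h1 : 0 < g1) (h2 : 0 < g2) (h3 : 0 < g3)
    (h12 : g1 ≠ g2) (h23 : g2 ≠ g3) (h31 : g3 ≠ g1)
    (R Rd : Matrix (Fin 3) (Fin 3) ℝ) (hR : SO3 R) (hRd : SO3 Rd) :
    0 ≤ Psi (Gmat g1 g2 g3) R Rd ∧ (Psi (Gmat g1 g2 g3) R Rd = 0 ↔ R = Rd) := by
  obtain ⟨hR1, _⟩ := hR
  obtain ⟨hRd1, _⟩ := hRd
  have hRd2 : Rd * Rdᵀ = 1 := mul_eq_one_comm.mp hRd1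
  set Q : Matrix (Fin 3) (Fin 3) ℝ := Rdᵀ * R with hQdef
  have hQ : Qᵀ * Q = 1 := by
    have : Qᵀ * Q = Rᵀ * (Rd * Rdᵀ) * R := by
      simp [hQdef, Matrix.transpose_mul, Matrix.mul_assoc]
    rw [this, hRd2, Matrix.mul_one, hR1]
  have e : ∀ i j, (Qᵀ * Q) i j = (1 : Matrix (Fin 3) (Fin 3) ℝ) i j := by
    intro i j; rw [hQ]
  have e00 := e 0 0; have e11 := e 1 1; have e22 := e 2 2
  simp [Matrix.mul_apply, Fin.sum_univ_three, Matrix.transpose_apply,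
    Matrix.one_apply] at e00 e11 e22
  have hPsi : Psi (Gmat g1 g2 g3) R Rd
      = (1/2) * (g1 * (1 - Q 0 0) + g2 * (1 - Q 1 1) + g3 * (1 - Q 2 2)) := by
    simp [Psi, Gmat, Matrix.trace_fin_three, Matrix.mul_apply, Fin.sum_univ_three,
      Matrix.diagonal, Matrix.one_apply, hQdef]
  have hq0 : Q 0 0 ≤ 1 := by nlinarith [sq_nonneg (Q 1 0), sq_nonneg (Q 2 0), sq_nonneg (Q 0 0 - 1)]
  have hq1 : Q 1 1 ≤ 1 := by nlinarith [sq_nonneg (Q 0 1), sq_nonneg (Q 2 1), sq_nonneg (Q 1 1 - 1)]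
  have hq2 : Q 2 2 ≤ 1 := by nlinarith [sq_nonneg (Q 0 2), sq_nonneg (Q 1 2), sq_nonneg (Q 2 2 - 1)]
  have t0 : 0 ≤ g1 * (1 - Q 0 0) := mul_nonneg h1.le (by linarith)
  have t1 : 0 ≤ g2 * (1 - Q 1 1) := mul_nonneg h2.le (by linarith)
  have t2 : 0 ≤ g3 * (1 - Q 2 2) := mul_nonneg h3.le (by linarith)
  constructor
  · rw [hPsi]; linarith
  constructor
  · intro hz
    rw [hPsi] at hz
    have z0 : g1 * (1 - Q 0 0) = 0 := by linarith
    have z1 : g2 * (1 - Q 1 1) = 0 := by linarith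
    have z2 : g3 * (1 - Q 2 2) = 0 := by linarith
    have d0 : Q 0 0 = 1 := by
      rcases mul_eq_zero.mp z0 with h | h
      · exact absurd h h1.ne'
      · linarith
    have d1 : Q 1 1 = 1 := by
      rcases mul_eq_zero.mp z1 with h | h
      · exact absurd h h2.ne'
      · linarith
    have d2 : Q 2 2 = 1 := by
      rcases mul_eq_zero.mp z2 with h | h
      · exact absurd h h3.ne'
      · linarith
    rw [d0] at e00; rw [d1] at e11; rw [d2] at e22
    have n10 := mul_self_nonneg (Q 1 0)
    have n20 := mul_self_nonneg (Q 2 0)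
    have n01 := mul_self_nonneg (Q 0 1)
    have n21 := mul_self_nonneg (Q 2 1)
    have n02 := mul_self_nonneg (Q 0 2)
    have n12 := mul_self_nonneg (Q 1 2)
    have o10 : Q 1 0 = 0 := mul_self_eq_zero.mp (by linarith)
    have o20 : Q 2 0 = 0 := mul_self_eq_zero.mp (by linarith)
    have o01 : Q 0 1 = 0 := mul_self_eq_zero.mp (by linarith)
    have o21 : Q 2 1 = 0 := mul_self_eq_zero.mp (by linarith)
    have o02 : Q 0 2 = 0 := mul_self_eq_zero.mp (by linarith)
    have o12 : Q 1 2 = 0 := mul_self_eq_zero.mp (by linarith)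
    have hQ1 : Q = 1 := by
      rw [Matrix.eta_fin_three Q, d0, d1, d2, o10, o20, o01, o21, o02, o12]
      exact Matrix.one_fin_three.symm
    have : Rd * Q = Rd * 1 := by rw [hQ1]
    rw [hQdef, ← Matrix.mul_assoc, hRd2, Matrix.one_mul, Matrix.mul_one] at this
    exact this
  · intro h
    subst h
    have : Q = 1 := hRd1
    rw [hPsi, this]
    simp
end
end

section
/- Let G = diag(g1,g2,g3) with distinct positive g_i, Ψ(R,R_d) = (1/2)tr(G(I - R_dᵀR)), and e_R(R,R_d) = (1/2)(G R_dᵀR - RᵀR_d G)ᵛ. Then the set of pairs (R,R_d) with e_R = 0 is exactly {R = R_d} ∪ {R = R_d·exp(π ŝ) : s ∈ {e1,e2,e3}}, i.e., the critical points of Ψ are the identity relative rotation and the three rotations by π about the coordinate axes. -/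
open Matrix
noncomputable section
section AuxSTMT5

lemma offdiag_stmt5 (g1 g2 g3 a b c p d e : ℝ)
    (h1 : 0 < g1) (h2 : 0 < g2) (h3 : 0 < g3)
    (h12 : g1 ≠ g2) (h23 : g2 ≠ g3) (h31 : g3 ≠ g1)
    (rel1 : g2 * a - p * g1 = 0)
    (rel2 : g1 * d - b * g3 = 0)
    (rel3 : g3 * c - e * g2 = 0)
    (S1 : a*a + b*b = p*p + d*d)
    (S2 : p*p + c*c = a*a + e*e) :
    a = 0 ∧ b = 0 ∧ c = 0 ∧ p = 0 ∧ d = 0 ∧ e = 0 := by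
  have sq1 : g2^2*a^2 = g1^2*p^2 := by linear_combination (g2*a + p*g1) * rel1
  have sq2 : g1^2*d^2 = g3^2*b^2 := by linear_combination (g1*d + b*g3) * rel2
  have sq3 : g3^2*c^2 = g2^2*e^2 := by linear_combination (g3*c + e*g2) * rel3
  have E1 : (g2^2-g1^2)*a^2 + (g3^2-g1^2)*b^2 = 0 := by
    linear_combination sq1 - sq2 - g1^2*S1
  have E2 : g2^2*(g2^2-g1^2)*a^2 = g1^2*(g3^2-g2^2)*c^2 := by
    linear_combination g2^2*sq1 - g1^2*sq3 + g1^2*g2^2*S2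
  have hu : g2^2 - g1^2 ≠ 0 := by
    intro hq
    have h' : (g1-g2)*(g1+g2) = 0 := by linear_combination -hq
    rcases mul_eq_zero.mp h' with h' | h'
    · exact h12 (by linarith)
    · linarith
  have hv : g3^2 - g2^2 ≠ 0 := by
    intro hq
    have h' : (g2-g3)*(g2+g3) = 0 := by linear_combination -hq
    rcases mul_eq_zero.mp h' with h' | h'
    · exact h23 (by linarith)
    · linarith
  have hw : g3^2 - g1^2 ≠ 0 := by
    intro hq
    have h' : (g3-g1)*(g3+g1) = 0 := by linear_combination hq
    rcases mul_eq_zero.mp h' with h' | h'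
    · exact h31 (by linarith)
    · linarith
  have hcoefc : g1^2*(g3^2-g2^2) ≠ 0 := mul_ne_zero (pow_ne_zero 2 h1.ne') hv
  have key : a^2 = 0 ∧ b^2 = 0 ∧ c^2 = 0 := by
    rcases hu.lt_or_gt with hu' | hu' <;> rcases hv.lt_or_gt with hv' | hv'
    · have f1 : 0 ≤ (g1^2-g2^2)*a^2 := mul_nonneg (by linarith) (sq_nonneg a)
      have f2 : 0 ≤ (g1^2-g3^2)*b^2 := mul_nonneg (by linarith) (sq_nonneg b)
      have h5 : (g2^2-g1^2)*a^2 = 0 := by linarith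
      have ha2 : a^2 = 0 := (mul_eq_zero.mp h5).resolve_left hu
      have h6 : (g3^2-g1^2)*b^2 = 0 := by linear_combination E1 - (g2^2-g1^2)*ha2
      have hb2 : b^2 = 0 := (mul_eq_zero.mp h6).resolve_left hw
      have h7 : g1^2*(g3^2-g2^2)*c^2 = 0 := by
        linear_combination -E2 + g2^2*(g2^2-g1^2)*ha2
      exact ⟨ha2, hb2, (mul_eq_zero.mp h7).resolve_left hcoefc⟩
    · have f1 : 0 ≤ g2^2*(g1^2-g2^2)*a^2 :=
        mul_nonneg (mul_nonneg (sq_nonneg g2) (by linarith)) (sq_nonneg a)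
      have f2 : 0 ≤ g1^2*(g3^2-g2^2)*c^2 :=
        mul_nonneg (mul_nonneg (sq_nonneg g1) (by linarith)) (sq_nonneg c)
      have h5 : g2^2*(g2^2-g1^2)*a^2 = 0 := by linarith
      have ha2 : a^2 = 0 :=
        (mul_eq_zero.mp h5).resolve_left (mul_ne_zero (pow_ne_zero 2 h2.ne') hu)
      have h7 : g1^2*(g3^2-g2^2)*c^2 = 0 := by
        linear_combination -E2 + g2^2*(g2^2-g1^2)*ha2
      have hc2 : c^2 = 0 := (mul_eq_zero.mp h7).resolve_left hcoefc
      have h6 : (g3^2-g1^2)*b^2 = 0 := by linear_combination E1 - (g2^2-g1^2)*ha2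
      exact ⟨ha2, (mul_eq_zero.mp h6).resolve_left hw, hc2⟩
    · have f1 : 0 ≤ g2^2*(g2^2-g1^2)*a^2 :=
        mul_nonneg (mul_nonneg (sq_nonneg g2) (by linarith)) (sq_nonneg a)
      have f2 : 0 ≤ g1^2*(g2^2-g3^2)*c^2 :=
        mul_nonneg (mul_nonneg (sq_nonneg g1) (by linarith)) (sq_nonneg c)
      have h5 : g2^2*(g2^2-g1^2)*a^2 = 0 := by linarith
      have ha2 : a^2 = 0 :=
        (mul_eq_zero.mp h5).resolve_left (mul_ne_zero (pow_ne_zero 2 h2.ne') hu)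
      have h7 : g1^2*(g3^2-g2^2)*c^2 = 0 := by
        linear_combination -E2 + g2^2*(g2^2-g1^2)*ha2
      have hc2 : c^2 = 0 := (mul_eq_zero.mp h7).resolve_left hcoefc
      have h6 : (g3^2-g1^2)*b^2 = 0 := by linear_combination E1 - (g2^2-g1^2)*ha2
      exact ⟨ha2, (mul_eq_zero.mp h6).resolve_left hw, hc2⟩
    · have f1 : 0 ≤ (g2^2-g1^2)*a^2 := mul_nonneg (by linarith) (sq_nonneg a)
      have f2 : 0 ≤ (g3^2-g1^2)*b^2 := mul_nonneg (by linarith) (sq_nonneg b)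
      have h5 : (g2^2-g1^2)*a^2 = 0 := by linarith
      have ha2 : a^2 = 0 := (mul_eq_zero.mp h5).resolve_left hu
      have h6 : (g3^2-g1^2)*b^2 = 0 := by linear_combination E1 - (g2^2-g1^2)*ha2
      have hb2 : b^2 = 0 := (mul_eq_zero.mp h6).resolve_left hw
      have h7 : g1^2*(g3^2-g2^2)*c^2 = 0 := by
        linear_combination -E2 + g2^2*(g2^2-g1^2)*ha2
      exact ⟨ha2, hb2, (mul_eq_zero.mp h7).resolve_left hcoefc⟩
  obtain ⟨ha2, hb2, hc2⟩ := key
  have ha0 : a = 0 := sq_eq_zero_iff.mp ha2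
  have hb0 : b = 0 := sq_eq_zero_iff.mp hb2
  have hc0 : c = 0 := sq_eq_zero_iff.mp hc2
  refine ⟨ha0, hb0, hc0, ?_, ?_, ?_⟩
  · have h' : p * g1 = 0 := by linear_combination g2*ha0 - rel1
    exact (mul_eq_zero.mp h').resolve_right h1.ne'
  · have h' : d * g1 = 0 := by linear_combination g3*hb0 + rel2
    exact (mul_eq_zero.mp h').resolve_right h1.ne'
  · have h' : e * g2 = 0 := by linear_combination g3*hc0 - rel3
    exact (mul_eq_zero.mp h').resolve_right h2.ne'

def psi0 : ℝ × ℂ →+* Matrix (Fin 3) (Fin 3) ℝ where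
  toFun p := !![p.1, 0, 0; 0, p.2.re, -p.2.im; 0, p.2.im, p.2.re]
  map_one' := by
    ext i j; fin_cases i <;> fin_cases j <;>
      simp [Matrix.one_apply, Matrix.vecHead, Matrix.vecTail]
  map_mul' p q := by
    ext i j; fin_cases i <;> fin_cases j <;>
      simp [Matrix.mul_apply, Fin.sum_univ_three, Complex.mul_re, Complex.mul_im,
        Matrix.vecHead, Matrix.vecTail] <;> ring
  map_zero' := by
    ext i j; fin_cases i <;> fin_cases j <;> simp [Matrix.vecHead, Matrix.vecTail]
  map_add' p q := by
    ext i j; fin_cases i <;> fin_cases j <;>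
      simp [Matrix.add_apply, Matrix.vecHead, Matrix.vecTail] <;> ring

def psi1 : ℝ × ℂ →+* Matrix (Fin 3) (Fin 3) ℝ where
  toFun p := !![p.2.re, 0, p.2.im; 0, p.1, 0; -p.2.im, 0, p.2.re]
  map_one' := by
    ext i j; fin_cases i <;> fin_cases j <;>
      simp [Matrix.one_apply, Matrix.vecHead, Matrix.vecTail]
  map_mul' p q := by
    ext i j; fin_cases i <;> fin_cases j <;>
      simp [Matrix.mul_apply, Fin.sum_univ_three, Complex.mul_re, Complex.mul_im,
        Matrix.vecHead, Matrix.vecTail] <;> ring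
  map_zero' := by
    ext i j; fin_cases i <;> fin_cases j <;> simp [Matrix.vecHead, Matrix.vecTail]
  map_add' p q := by
    ext i j; fin_cases i <;> fin_cases j <;>
      simp [Matrix.add_apply, Matrix.vecHead, Matrix.vecTail] <;> ring

def psi2 : ℝ × ℂ →+* Matrix (Fin 3) (Fin 3) ℝ where
  toFun p := !![p.2.re, -p.2.im, 0; p.2.im, p.2.re, 0; 0, 0, p.1]
  map_one' := by
    ext i j; fin_cases i <;> fin_cases j <;>
      simp [Matrix.one_apply, Matrix.vecHead, Matrix.vecTail]
  map_mul' p q := by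
    ext i j; fin_cases i <;> fin_cases j <;>
      simp [Matrix.mul_apply, Fin.sum_univ_three, Complex.mul_re, Complex.mul_im,
        Matrix.vecHead, Matrix.vecTail] <;> ring
  map_zero' := by
    ext i j; fin_cases i <;> fin_cases j <;> simp [Matrix.vecHead, Matrix.vecTail]
  map_add' p q := by
    ext i j; fin_cases i <;> fin_cases j <;>
      simp [Matrix.add_apply, Matrix.vecHead, Matrix.vecTail] <;> ring

lemma psi0_cont : Continuous psi0 := by
  apply continuous_matrix; intro i j
  fin_cases i <;> fin_cases j <;>
    simp [psi0, Matrix.vecHead, Matrix.vecTail] <;> fun_prop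

lemma psi1_cont : Continuous psi1 := by
  apply continuous_matrix; intro i j
  fin_cases i <;> fin_cases j <;>
    simp [psi1, Matrix.vecHead, Matrix.vecTail] <;> fun_prop

lemma psi2_cont : Continuous psi2 := by
  apply continuous_matrix; intro i j
  fin_cases i <;> fin_cases j <;>
    simp [psi2, Matrix.vecHead, Matrix.vecTail] <;> fun_prop

lemma exp_prod_eq_stmt5 (x : ℝ) (z : ℂ) :
    NormedSpace.exp ((x, z) : ℝ × ℂ) = (Real.exp x, Complex.exp z) := by
  have h1 := Prod.fst_exp ((x, z) : ℝ × ℂ)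
  have h2 := Prod.snd_exp ((x, z) : ℝ × ℂ)
  have h3 : (NormedSpace.exp : ℂ → ℂ) = NormedSpace.exp := rfl
  have h4 : NormedSpace.exp ((x, z) : ℝ × ℂ) = (NormedSpace.exp x, NormedSpace.exp z) :=
    Prod.ext h1 h2
  rw [h4, ← Real.exp_eq_exp_ℝ, h3, ← Complex.exp_eq_exp_ℂ]

lemma exp_pi_hat0 : NormedSpace.exp (Real.pi • hat (Pi.single (0 : Fin 3) 1)) =
    !![1,0,0; 0,-1,0; 0,0,-1] := by
  letI : SeminormedRing (Matrix (Fin 3) (Fin 3) ℝ) := Matrix.linftyOpSemiNormedRing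
  letI : NormedRing (Matrix (Fin 3) (Fin 3) ℝ) := Matrix.linftyOpNormedRing
  letI : NormedAlgebra ℝ (Matrix (Fin 3) (Fin 3) ℝ) := Matrix.linftyOpNormedAlgebra
  have e1 : Real.pi • hat (Pi.single (0 : Fin 3) 1) = psi0 (0, Real.pi * Complex.I) := by
    ext i j; fin_cases i <;> fin_cases j <;>
      simp [hat, psi0, Matrix.vecHead, Matrix.vecTail, Pi.single_apply]
  rw [e1]; erw [← NormedSpace.map_exp psi0 psi0_cont]; rw [exp_prod_eq_stmt5, Real.exp_zero,
    Complex.exp_pi_mul_I]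
  ext i j; fin_cases i <;> fin_cases j <;> simp [psi0, Matrix.vecHead, Matrix.vecTail]

lemma exp_pi_hat1 : NormedSpace.exp (Real.pi • hat (Pi.single (1 : Fin 3) 1)) =
    !![-1,0,0; 0,1,0; 0,0,-1] := by
  letI : SeminormedRing (Matrix (Fin 3) (Fin 3) ℝ) := Matrix.linftyOpSemiNormedRing
  letI : NormedRing (Matrix (Fin 3) (Fin 3) ℝ) := Matrix.linftyOpNormedRing
  letI : NormedAlgebra ℝ (Matrix (Fin 3) (Fin 3) ℝ) := Matrix.linftyOpNormedAlgebra
  have e1 : Real.pi • hat (Pi.single (1 : Fin 3) 1) = psi1 (0, Real.pi * Complex.I) := by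
    ext i j; fin_cases i <;> fin_cases j <;>
      simp [hat, psi1, Matrix.vecHead, Matrix.vecTail, Pi.single_apply]
  rw [e1]; erw [← NormedSpace.map_exp psi1 psi1_cont]; rw [exp_prod_eq_stmt5, Real.exp_zero,
    Complex.exp_pi_mul_I]
  ext i j; fin_cases i <;> fin_cases j <;> simp [psi1, Matrix.vecHead, Matrix.vecTail]

lemma exp_pi_hat2 : NormedSpace.exp (Real.pi • hat (Pi.single (2 : Fin 3) 1)) =
    !![-1,0,0; 0,-1,0; 0,0,1] := by
  letI : SeminormedRing (Matrix (Fin 3) (Fin 3) ℝ) := Matrix.linftyOpSemiNormedRing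
  letI : NormedRing (Matrix (Fin 3) (Fin 3) ℝ) := Matrix.linftyOpNormedRing
  letI : NormedAlgebra ℝ (Matrix (Fin 3) (Fin 3) ℝ) := Matrix.linftyOpNormedAlgebra
  have e1 : Real.pi • hat (Pi.single (2 : Fin 3) 1) = psi2 (0, Real.pi * Complex.I) := by
    ext i j; fin_cases i <;> fin_cases j <;>
      simp [hat, psi2, Matrix.vecHead, Matrix.vecTail, Pi.single_apply]
  rw [e1]; erw [← NormedSpace.map_exp psi2 psi2_cont]; rw [exp_prod_eq_stmt5, Real.exp_zero,
    Complex.exp_pi_mul_I]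
  ext i j; fin_cases i <;> fin_cases j <;> simp [psi2, Matrix.vecHead, Matrix.vecTail]

lemma eRvec_zero_of (G Rd D : Matrix (Fin 3) (Fin 3) ℝ) (hRd : Rdᵀ * Rd = 1)
    (hD : Dᵀ = D) (hcomm : G * D = D * G) : eRvec G (Rd * D) Rd = 0 := by
  have hM : G * Rdᵀ * (Rd * D) - (Rd * D)ᵀ * Rd * G = 0 := by
    rw [transpose_mul, hD, mul_assoc G, ← mul_assoc Rdᵀ, hRd, one_mul,
      mul_assoc D Rdᵀ Rd, hRd, mul_one, hcomm, sub_self]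
  unfold eRvec
  rw [hM]
  funext k; fin_cases k <;> simp [vee]

end AuxSTMT5

theorem stmt5 (g1 g2 g3 : ℝ) (h1 : 0 < g1) (h2 : 0 < g2) (h3 : 0 < g3)
    (h12 : g1 ≠ g2) (h23 : g2 ≠ g3) (h31 : g3 ≠ g1)
    (R Rd : Matrix (Fin 3) (Fin 3) ℝ) (hR : SO3 R) (hRd : SO3 Rd) :
    eRvec (Gmat g1 g2 g3) R Rd = 0 ↔
      R = Rd ∨ ∃ i : Fin 3,
        R = Rd * NormedSpace.exp (Real.pi • hat (Pi.single i 1)) := by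
  obtain ⟨hRo, hRdet⟩ := hR
  obtain ⟨hRdo, hRddet⟩ := hRd
  constructor
  · intro h
    set G := Gmat g1 g2 g3 with hG
    set Q := Rdᵀ * R with hQdef
    have hA : G * Rdᵀ * R = G * Q := mul_assoc _ _ _
    have hB : Rᵀ * Rd * G = Qᵀ * G := by rw [hQdef, transpose_mul, transpose_transpose]
    have hQo : Qᵀ * Q = 1 := by
      rw [hQdef, transpose_mul, transpose_transpose, mul_assoc, ← mul_assoc Rd,
        mul_eq_one_comm.mp hRdo, one_mul, hRo]
    have hQo' : Q * Qᵀ = 1 := mul_eq_one_comm.mp hQo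
    have hQdet : Q.det = 1 := by rw [hQdef, det_mul, det_transpose, hRddet, hRdet, mul_one]
    have hRQ : R = Rd * Q := by rw [hQdef, ← mul_assoc, mul_eq_one_comm.mp hRdo, one_mul]
    simp only [eRvec, hA, hB] at h
    have e21 := congrFun h 0
    have e02 := congrFun h 1
    have e10 := congrFun h 2
    simp only [vee, Pi.smul_apply, Matrix.cons_val_zero, Matrix.cons_val_one, Matrix.head_cons,
      Matrix.sub_apply, smul_eq_mul, Pi.zero_apply, Matrix.cons_val_two, Matrix.tail_cons]
      at e21 e02 e10
    rw [hG] at e21 e02 e10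
    simp only [Gmat, Matrix.diagonal_mul, Matrix.mul_diagonal, Matrix.transpose_apply]
      at e21 e02 e10
    norm_num [Matrix.vecHead, Matrix.vecTail] at e21 e02 e10
    have c0 := congrFun (congrFun hQo 0) 0
    have c1 := congrFun (congrFun hQo 1) 1
    have c2 := congrFun (congrFun hQo 2) 2
    have r0 := congrFun (congrFun hQo' 0) 0
    have r1 := congrFun (congrFun hQo' 1) 1
    have r2 := congrFun (congrFun hQo' 2) 2
    simp only [Matrix.mul_apply, Fin.sum_univ_three, Matrix.transpose_apply,
      Matrix.one_apply_eq] at c0 c1 c2 r0 r1 r2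
    rw [Matrix.det_fin_three] at hQdet
    have e21' : g3 * Q 2 1 - Q 1 2 * g2 = 0 := by simpa using e21
    have e02' : g1 * Q 0 2 - Q 2 0 * g3 = 0 := by simpa using e02
    have e10' : g2 * Q 1 0 - Q 0 1 * g1 = 0 := by linarith
    obtain ⟨za, zb, zc, zp, zd, ze⟩ :=
      offdiag_stmt5 g1 g2 g3 (Q 1 0) (Q 2 0) (Q 2 1) (Q 0 1) (Q 0 2) (Q 1 2)
        h1 h2 h3 h12 h23 h31 e10' e02' e21'
        (by linarith) (by linarith)
    rw [za, zb] at c0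
    rw [zp, zc] at c1
    rw [zd, ze] at c2
    rw [za, zb, zc, zp, zd, ze] at hQdet
    norm_num at c0 c1 c2 hQdet
    have d0 := mul_self_eq_one_iff.mp c0
    have d1 := mul_self_eq_one_iff.mp c1
    have d2 := mul_self_eq_one_iff.mp c2
    rcases d0 with h00 | h00 <;> rcases d1 with h11 | h11 <;> rcases d2 with h22 | h22 <;>
      rw [h00, h11, h22] at hQdet <;> norm_num at hQdet
    · left
      have hQ1 : Q = 1 := by
        ext i j
        fin_cases i <;> fin_cases j <;>
          simp [Matrix.one_apply, Matrix.vecHead, Matrix.vecTail,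
            za, zb, zc, zp, zd, ze, h00, h11, h22]
      rw [hRQ, hQ1, mul_one]
    · right; refine ⟨0, ?_⟩
      have hQ1 : Q = !![1,0,0;0,-1,0;0,0,-1] := by
        ext i j
        fin_cases i <;> fin_cases j <;>
          simp [Matrix.vecHead, Matrix.vecTail, za, zb, zc, zp, zd, ze, h00, h11, h22]
      rw [exp_pi_hat0, hRQ, hQ1]
    · right; refine ⟨1, ?_⟩
      have hQ1 : Q = !![-1,0,0;0,1,0;0,0,-1] := by
        ext i j
        fin_cases i <;> fin_cases j <;>
          simp [Matrix.vecHead, Matrix.vecTail, za, zb, zc, zp, zd, ze, h00, h11, h22]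
      rw [exp_pi_hat1, hRQ, hQ1]
    · right; refine ⟨2, ?_⟩
      have hQ1 : Q = !![-1,0,0;0,-1,0;0,0,1] := by
        ext i j
        fin_cases i <;> fin_cases j <;>
          simp [Matrix.vecHead, Matrix.vecTail, za, zb, zc, zp, zd, ze, h00, h11, h22]
      rw [exp_pi_hat2, hRQ, hQ1]
  · rintro (rfl | ⟨i, rfl⟩)
    · have := eRvec_zero_of (Gmat g1 g2 g3) R 1 hRdo (by simp) (by simp)
      simpa using this
    · fin_cases i
      · show eRvec (Gmat g1 g2 g3)
            (Rd * NormedSpace.exp (Real.pi • hat (Pi.single (0 : Fin 3) 1))) Rd = 0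
        rw [exp_pi_hat0]
        refine eRvec_zero_of _ _ _ hRdo ?_ ?_
        · ext i j; fin_cases i <;> fin_cases j <;>
            simp [Matrix.transpose_apply, Matrix.vecHead, Matrix.vecTail]
        · ext i j; fin_cases i <;> fin_cases j <;>
            simp [Gmat, Matrix.mul_apply, Fin.sum_univ_three, Matrix.diagonal,
              Matrix.vecHead, Matrix.vecTail]
      · show eRvec (Gmat g1 g2 g3)
            (Rd * NormedSpace.exp (Real.pi • hat (Pi.single (1 : Fin 3) 1))) Rd = 0
        rw [exp_pi_hat1]
        refine eRvec_zero_of _ _ _ hRdo ?_ ?_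
        · ext i j; fin_cases i <;> fin_cases j <;>
            simp [Matrix.transpose_apply, Matrix.vecHead, Matrix.vecTail]
        · ext i j; fin_cases i <;> fin_cases j <;>
            simp [Gmat, Matrix.mul_apply, Fin.sum_univ_three, Matrix.diagonal,
              Matrix.vecHead, Matrix.vecTail]
      · show eRvec (Gmat g1 g2 g3)
            (Rd * NormedSpace.exp (Real.pi • hat (Pi.single (2 : Fin 3) 1))) Rd = 0
        rw [exp_pi_hat2]
        refine eRvec_zero_of _ _ _ hRdo ?_ ?_
        · ext i j; fin_cases i <;> fin_cases j <;>
            simp [Matrix.transpose_apply, Matrix.vecHead, Matrix.vecTail]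
        · ext i j; fin_cases i <;> fin_cases j <;>
            simp [Gmat, Matrix.mul_apply, Fin.sum_univ_three, Matrix.diagonal,
              Matrix.vecHead, Matrix.vecTail]
end
end

section
/- Let G = diag(g1,g2,g3) with distinct positive constants and define Ψ(R,R_d) = (1/2)tr(G(I - R_dᵀR)) and e_R(R,R_d) = (1/2)(G R_dᵀR - RᵀR_d G)ᵛ. Let h1 = min{g1+g2, g2+g3, g3+g1}, h2 = max{(g1-g2)², (g2-g3)², (g3-g1)²}, h3 = max{(g1+g2)², (g2+g3)², (g3+g1)²}, and b1 = h1/(h2+h3). Then b1·‖e_R(R,R_d)‖² ≤ Ψ(R,R_d) for all R, R_d ∈ SO(3). -/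
open Matrix
noncomputable section
set_option maxHeartbeats 1000000 in
/-- Scalar core of the inequality, for the entries of a rotation matrix. -/
lemma core_scalar (g1 g2 g3 h1 h2 h3 : ℝ)
    (hp1 : 0 ≤ h1)
    (hd1 : (g3-g2)^2 ≤ h2) (hd2 : (g1-g3)^2 ≤ h2) (hd3 : (g2-g1)^2 ≤ h2)
    (hs1 : (g2+g3)^2 ≤ h3) (hs2 : (g3+g1)^2 ≤ h3) (hs3 : (g1+g2)^2 ≤ h3)
    (hm1 : h1 ≤ g2+g3) (hm2 : h1 ≤ g3+g1) (hm3 : h1 ≤ g1+g2)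
    (a b c d e f g h i : ℝ)
    (r1 : a^2+b^2+c^2 = 1) (r2 : d^2+e^2+f^2 = 1) (r3 : g^2+h^2+i^2 = 1)
    (c1 : a^2+d^2+g^2 = 1) (c2 : b^2+e^2+h^2 = 1) (c3 : c^2+f^2+i^2 = 1)
    (ka : a = e*i - f*h) (ke : e = a*i - c*g) (ki : i = a*e - b*d) :
    h1 * ((g3*h-g2*f)^2+(g1*c-g3*g)^2+(g2*d-g1*b)^2)
      ≤ 2*(h2+h3)*(g1*(1-a)+g2*(1-e)+g3*(1-i)) := by
  have E1 : h^2 - f^2 = c^2 - g^2 := by linear_combination r3 - c3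
  have E2 : h^2 - f^2 = d^2 - b^2 := by linear_combination c2 - r2
  have E3 : (f+h)^2 = (1-a)^2 - (e-i)^2 := by linear_combination r2 + r3 - c1 + 2*ka
  have E4 : (c+g)^2 = (1-e)^2 - (i-a)^2 := by linear_combination c1 + c3 - r2 + 2*ke
  have E5 : (b+d)^2 = (1-i)^2 - (a-e)^2 := by linear_combination r1 + r2 - c3 + 2*ki
  have E6 : (h-f)^2+(c-g)^2+(d-b)^2 = (3-(a+e+i))*(1+(a+e+i)) := by
    linear_combination r1 + r2 + r3 - 2*ka - 2*ke - 2*ki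
  have E7 : 4*(1+a-e-i) = (h-f)^2+(b+d)^2+(c+g)^2+(1+a-e-i)^2 := by
    linear_combination -r1 - r2 - r3 + 2*ka - 2*ke - 2*ki
  have E8 : 4*(1+e-a-i) = (c-g)^2+(b+d)^2+(f+h)^2+(1+e-a-i)^2 := by
    linear_combination -r1 - r2 - r3 - 2*ka + 2*ke - 2*ki
  have E9 : 4*(1+i-a-e) = (d-b)^2+(c+g)^2+(f+h)^2+(1+i-a-e)^2 := by
    linear_combination -r1 - r2 - r3 - 2*ka - 2*ke + 2*ki
  have E10 : 4*(1+(a+e+i)) = (h-f)^2+(c-g)^2+(d-b)^2+(1+(a+e+i))^2 := by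
    linear_combination -r1 - r2 - r3 + 2*ka + 2*ke + 2*ki
  set w1 : ℝ := (1+a-e-i)/2 with hw1d
  set w2 : ℝ := (1+e-a-i)/2 with hw2d
  set w3 : ℝ := (1+i-a-e)/2 with hw3d
  clear_value w1 w2 w3
  have hw1 : 0 ≤ w1 := by
    rw [hw1d]
    linarith only [E7, sq_nonneg (h-f), sq_nonneg (b+d), sq_nonneg (c+g), sq_nonneg (1+a-e-i)]
  have hw2 : 0 ≤ w2 := by
    rw [hw2d]
    linarith only [E8, sq_nonneg (c-g), sq_nonneg (b+d), sq_nonneg (f+h), sq_nonneg (1+e-a-i)]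
  have hw3 : 0 ≤ w3 := by
    rw [hw3d]
    linarith only [E9, sq_nonneg (d-b), sq_nonneg (c+g), sq_nonneg (f+h), sq_nonneg (1+i-a-e)]
  set t : ℝ := w1+w2+w3 with htd
  clear_value t
  have ht0 : 0 ≤ t := by rw [htd]; linarith only [hw1, hw2, hw3]
  have htr : 1 + (a+e+i) = 4 - 2*t := by rw [htd, hw1d, hw2d, hw3d]; ring
  have ht2 : t ≤ 2 := by
    have h4 : (0:ℝ) ≤ 1 + (a+e+i) := by
      linarith only [E10, sq_nonneg (h-f), sq_nonneg (c-g), sq_nonneg (d-b), sq_nonneg (1+(a+e+i))]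
    linarith only [htr, h4]
  have key : 4*((g3*h-g2*f)^2+(g1*c-g3*g)^2+(g2*d-g1*b)^2)
      = (g3-g2)^2*(f+h)^2 + (g1-g3)^2*(c+g)^2 + (g2-g1)^2*(b+d)^2
        + (g2+g3)^2*(h-f)^2 + (g3+g1)^2*(c-g)^2 + (g1+g2)^2*(d-b)^2 := by
    linear_combination (-2*(g1^2-g3^2))*E1 + (-2*(g2^2-g1^2))*E2
  have hP1 : (f+h)^2 = 4*(w2*w3) := by rw [hw2d, hw3d]; linear_combination E3
  have hP2 : (c+g)^2 = 4*(w3*w1) := by rw [hw3d, hw1d]; linear_combination E4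
  have hP3 : (b+d)^2 = 4*(w1*w2) := by rw [hw1d, hw2d]; linear_combination E5
  have hM : (h-f)^2+(c-g)^2+(d-b)^2 = 8*t - 4*t^2 := by
    rw [htd, hw1d, hw2d, hw3d]; linear_combination E6
  have h2nn : 0 ≤ h2 := le_trans (sq_nonneg _) hd1
  have h3nn : 0 ≤ h3 := le_trans (sq_nonneg _) hs1
  have hts : t^2 ≤ 2*t := by
    have h0 := mul_nonneg ht0 (by linarith only [ht2] : (0:ℝ) ≤ 2 - t)
    nlinarith only [h0]
  have hte : t^2 = (w1+w2+w3)^2 := by rw [htd]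
  have hsq : w1*w2+w2*w3+w3*w1 ≤ (2/3)*t := by
    nlinarith only [sq_nonneg (w1-w2), sq_nonneg (w2-w3), sq_nonneg (w3-w1), hts, hte]
  have hPsum : (f+h)^2+(c+g)^2+(b+d)^2 ≤ (8/3)*t := by
    linarith only [hP1, hP2, hP3, hsq]
  have hMsum : (h-f)^2+(c-g)^2+(d-b)^2 ≤ 8*t := by
    linarith only [hM, sq_nonneg t]
  have hDP : (g3-g2)^2*(f+h)^2 + (g1-g3)^2*(c+g)^2 + (g2-g1)^2*(b+d)^2 ≤ h2*((8/3)*t) := by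
    have b1 := mul_le_mul_of_nonneg_right hd1 (sq_nonneg (f+h))
    have b2 := mul_le_mul_of_nonneg_right hd2 (sq_nonneg (c+g))
    have b3 := mul_le_mul_of_nonneg_right hd3 (sq_nonneg (b+d))
    have b4 := mul_le_mul_of_nonneg_left hPsum h2nn
    linarith only [b1, b2, b3, b4]
  have hSM : (g2+g3)^2*(h-f)^2 + (g3+g1)^2*(c-g)^2 + (g1+g2)^2*(d-b)^2 ≤ h3*(8*t) := by
    have b1 := mul_le_mul_of_nonneg_right hs1 (sq_nonneg (h-f))
    have b2 := mul_le_mul_of_nonneg_right hs2 (sq_nonneg (c-g))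
    have b3 := mul_le_mul_of_nonneg_right hs3 (sq_nonneg (d-b))
    have b4 := mul_le_mul_of_nonneg_left hMsum h3nn
    linarith only [b1, b2, b3, b4]
  have hS4 : 4*((g3*h-g2*f)^2+(g1*c-g3*g)^2+(g2*d-g1*b)^2) ≤ h2*((8/3)*t) + h3*(8*t) := by
    linarith only [key, hDP, hSM]
  have hPsi : g1*(1-a)+g2*(1-e)+g3*(1-i) = (g2+g3)*w1+(g3+g1)*w2+(g1+g2)*w3 := by
    rw [hw1d, hw2d, hw3d]; ring
  have hPsi_ge : h1*t ≤ g1*(1-a)+g2*(1-e)+g3*(1-i) := by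
    rw [hPsi, htd]
    have b1 := mul_le_mul_of_nonneg_right hm1 hw1
    have b2 := mul_le_mul_of_nonneg_right hm2 hw2
    have b3 := mul_le_mul_of_nonneg_right hm3 hw3
    linarith only [b1, b2, b3]
  have step1 : h1*(4*((g3*h-g2*f)^2+(g1*c-g3*g)^2+(g2*d-g1*b)^2)) ≤ h1*(h2*((8/3)*t) + h3*(8*t)) :=
    mul_le_mul_of_nonneg_left hS4 hp1
  have step2 : h1*(h2*((8/3)*t) + h3*(8*t)) ≤ 8*(h2+h3)*(h1*t) := by
    have h0 := mul_nonneg (mul_nonneg hp1 h2nn) ht0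
    nlinarith only [h0]
  have step3 : 8*(h2+h3)*(h1*t) ≤ 8*(h2+h3)*(g1*(1-a)+g2*(1-e)+g3*(1-i)) := by
    apply mul_le_mul_of_nonneg_left hPsi_ge
    linarith only [h2nn, h3nn]
  linarith only [step1, step2, step3]

lemma enorm3_sq (x : Fin 3 → ℝ) : (enorm3 x)^2 = (x 0)^2 + (x 1)^2 + (x 2)^2 := by
  have h0 : (0:ℝ) ≤ x ⬝ᵥ x := by
    simp only [dotProduct, Fin.sum_univ_three]
    nlinarith only [mul_self_nonneg (x 0), mul_self_nonneg (x 1), mul_self_nonneg (x 2)]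
  rw [enorm3, Real.sq_sqrt h0]
  simp only [dotProduct, Fin.sum_univ_three]
  ring

set_option maxHeartbeats 1000000 in
theorem stmt6 (g1 g2 g3 : ℝ) (hg1 : 0 < g1) (hg2 : 0 < g2) (hg3 : 0 < g3)
    (h12 : g1 ≠ g2) (h23 : g2 ≠ g3) (h31 : g3 ≠ g1)
    (h1 h2 h3 b1 : ℝ)
    (hh1 : h1 = min (g1 + g2) (min (g2 + g3) (g3 + g1)))
    (hh2 : h2 = max ((g1 - g2)^2) (max ((g2 - g3)^2) ((g3 - g1)^2)))
    (hh3 : h3 = max ((g1 + g2)^2) (max ((g2 + g3)^2) ((g3 + g1)^2)))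
    (hb1 : b1 = h1 / (h2 + h3))
    (R Rd : Matrix (Fin 3) (Fin 3) ℝ) (hR : SO3 R) (hRd : SO3 Rd) :
    b1 * (enorm3 (eRvec (Gmat g1 g2 g3) R Rd))^2 ≤ Psi (Gmat g1 g2 g3) R Rd := by
  obtain ⟨hRo, hRdet⟩ := hR
  obtain ⟨hRdo, hRddet⟩ := hRd
  set Q : Matrix (Fin 3) (Fin 3) ℝ := Rdᵀ * R with hQdef
  have hRd1 : Rd * Rdᵀ = 1 := mul_eq_one_comm.mp hRdo
  have hQl : Qᵀ * Q = 1 := by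
    rw [hQdef, transpose_mul, transpose_transpose]
    calc Rᵀ * Rd * (Rdᵀ * R) = Rᵀ * (Rd * Rdᵀ) * R := by
          rw [Matrix.mul_assoc, Matrix.mul_assoc, Matrix.mul_assoc]
      _ = 1 := by rw [hRd1, Matrix.mul_one, hRo]
  have hQr : Q * Qᵀ = 1 := mul_eq_one_comm.mp hQl
  have hQdet : Q.det = 1 := by
    rw [hQdef, det_mul, det_transpose, hRdet, hRddet, mul_one]
  have hadj : Q.adjugate = Qᵀ := by
    have hinv : Q⁻¹ = Qᵀ := inv_eq_right_inv hQr
    rw [Matrix.inv_def, hQdet] at hinv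
    simpa using hinv
  -- rewrite the goal in terms of Q
  have hPsiQ : Psi (Gmat g1 g2 g3) R Rd
      = 1/2*(g1*(1 - Q 0 0)+g2*(1 - Q 1 1)+g3*(1 - Q 2 2)) := by
    rw [Psi, ← hQdef, Matrix.trace_fin_three]
    simp [Gmat, Matrix.diagonal_mul, Matrix.sub_apply, Matrix.one_apply]
    try ring
  have hArw : Gmat g1 g2 g3 * Rdᵀ * R - Rᵀ * Rd * Gmat g1 g2 g3
      = Gmat g1 g2 g3 * Q - Qᵀ * Gmat g1 g2 g3 := by
    rw [hQdef, transpose_mul, transpose_transpose, Matrix.mul_assoc]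
  have hx : (enorm3 (eRvec (Gmat g1 g2 g3) R Rd))^2
      = 1/4*((g3 * Q 2 1 - g2 * Q 1 2)^2 + (g1 * Q 0 2 - g3 * Q 2 0)^2
          + (g2 * Q 1 0 - g1 * Q 0 1)^2) := by
    rw [enorm3_sq]
    simp only [eRvec, vee, Pi.smul_apply, smul_eq_mul,
      Matrix.cons_val_zero, Matrix.cons_val_one, Matrix.head_cons,
      Matrix.cons_val_two, Matrix.tail_cons]
    rw [hArw]
    simp only [Matrix.sub_apply, Matrix.transpose_apply, Gmat,
      Matrix.diagonal_mul, Matrix.mul_diagonal,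
      Matrix.cons_val_zero, Matrix.cons_val_one, Matrix.head_cons,
      Matrix.cons_val_two, Matrix.tail_cons]
    ring
  -- extract scalar equations for the entries of Q
  have hr1 : (Q 0 0)^2 + (Q 0 1)^2 + (Q 0 2)^2 = 1 := by
    have hh := congrFun (congrFun hQr 0) 0
    simp [Matrix.mul_apply, Fin.sum_univ_three, Matrix.one_apply] at hh
    linear_combination hh
  have hr2 : (Q 1 0)^2 + (Q 1 1)^2 + (Q 1 2)^2 = 1 := by
    have hh := congrFun (congrFun hQr 1) 1
    simp [Matrix.mul_apply, Fin.sum_univ_three, Matrix.one_apply] at hh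
    linear_combination hh
  have hr3 : (Q 2 0)^2 + (Q 2 1)^2 + (Q 2 2)^2 = 1 := by
    have hh := congrFun (congrFun hQr 2) 2
    simp [Matrix.mul_apply, Fin.sum_univ_three, Matrix.one_apply] at hh
    linear_combination hh
  have hc1 : (Q 0 0)^2 + (Q 1 0)^2 + (Q 2 0)^2 = 1 := by
    have hh := congrFun (congrFun hQl 0) 0
    simp [Matrix.mul_apply, Fin.sum_univ_three, Matrix.one_apply] at hh
    linear_combination hh
  have hc2 : (Q 0 1)^2 + (Q 1 1)^2 + (Q 2 1)^2 = 1 := by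
    have hh := congrFun (congrFun hQl 1) 1
    simp [Matrix.mul_apply, Fin.sum_univ_three, Matrix.one_apply] at hh
    linear_combination hh
  have hc3 : (Q 0 2)^2 + (Q 1 2)^2 + (Q 2 2)^2 = 1 := by
    have hh := congrFun (congrFun hQl 2) 2
    simp [Matrix.mul_apply, Fin.sum_univ_three, Matrix.one_apply] at hh
    linear_combination hh
  have hka : Q 0 0 = Q 1 1 * Q 2 2 - Q 1 2 * Q 2 1 := by
    have hh := congrFun (congrFun hadj 0) 0
    rw [Matrix.adjugate_fin_three] at hh
    simp at hh
    linear_combination -hh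
  have hke : Q 1 1 = Q 0 0 * Q 2 2 - Q 0 2 * Q 2 0 := by
    have hh := congrFun (congrFun hadj 1) 1
    rw [Matrix.adjugate_fin_three] at hh
    simp at hh
    linear_combination -hh
  have hki : Q 2 2 = Q 0 0 * Q 1 1 - Q 0 1 * Q 1 0 := by
    have hh := congrFun (congrFun hadj 2) 2
    rw [Matrix.adjugate_fin_three] at hh
    simp at hh
    linear_combination -hh
  -- the h-constants
  have hm1 : h1 ≤ g2 + g3 := by
    rw [hh1]; exact le_trans (min_le_right _ _) (min_le_left _ _)
  have hm2 : h1 ≤ g3 + g1 := by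
    rw [hh1]; exact le_trans (min_le_right _ _) (min_le_right _ _)
  have hm3 : h1 ≤ g1 + g2 := by rw [hh1]; exact min_le_left _ _
  have hp1 : 0 ≤ h1 := by
    rw [hh1]
    apply le_min (by linarith)
    exact le_min (by linarith) (by linarith)
  have hd1 : (g3 - g2)^2 ≤ h2 := by
    rw [hh2, show (g3 - g2)^2 = (g2 - g3)^2 by ring]
    exact le_max_of_le_right (le_max_left _ _)
  have hd2 : (g1 - g3)^2 ≤ h2 := by
    rw [hh2, show (g1 - g3)^2 = (g3 - g1)^2 by ring]
    exact le_max_of_le_right (le_max_right _ _)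
  have hd3 : (g2 - g1)^2 ≤ h2 := by
    rw [hh2, show (g2 - g1)^2 = (g1 - g2)^2 by ring]
    exact le_max_left _ _
  have hs1 : (g2 + g3)^2 ≤ h3 := by
    rw [hh3]; exact le_max_of_le_right (le_max_left _ _)
  have hs2 : (g3 + g1)^2 ≤ h3 := by
    rw [hh3]; exact le_max_of_le_right (le_max_right _ _)
  have hs3 : (g1 + g2)^2 ≤ h3 := by rw [hh3]; exact le_max_left _ _
  have hpos : 0 < h2 + h3 := by
    have hne : g1 - g2 ≠ 0 := sub_ne_zero.mpr h12
    have h2pos : 0 < (g1 - g2)^2 := by positivity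
    have := sq_nonneg (g1 + g2)
    linarith [hd3, hs3, show (g2 - g1)^2 = (g1 - g2)^2 by ring]
  -- main bound
  have hcore := core_scalar g1 g2 g3 h1 h2 h3 hp1 hd1 hd2 hd3 hs1 hs2 hs3 hm1 hm2 hm3
    (Q 0 0) (Q 0 1) (Q 0 2) (Q 1 0) (Q 1 1) (Q 1 2) (Q 2 0) (Q 2 1) (Q 2 2)
    hr1 hr2 hr3 hc1 hc2 hc3 hka hke hki
  rw [hx, hPsiQ, hb1, div_mul_eq_mul_div, div_le_iff₀ hpos]
  linarith only [hcore]
end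
end

section
/- With G = diag(g1,g2,g3) (distinct positive g_i), Ψ and e_R as above, h1 = min{g1+g2,g2+g3,g3+g1}, h4 = max{g1+g2,g2+g3,g3+g1}, h5 = min{(g1+g2)²,(g2+g3)²,(g3+g1)²}, and a constant 0 < ψ < h1: if Ψ(R,R_d) < ψ then Ψ(R,R_d) ≤ b2·‖e_R(R,R_d)‖², where b2 = h1·h4/(h5·(h1-ψ)). -/
open Matrix
noncomputable section
set_option maxHeartbeats 1000000

lemma le_one_of_sq (a b c : ℝ) (h : a*a + b*b + c*c = 1) : a ≤ 1 := by
  nlinarith [sq_nonneg (a - 1), mul_self_nonneg b, mul_self_nonneg c]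

lemma nonneg_of_pairwise (p q r : ℝ) (hpq : 0 ≤ p*q) (hpr : 0 ≤ p*r) (hqr : 0 ≤ q*r)
    (hs : 0 ≤ p + q + r) : 0 ≤ p := by nlinarith

lemma core (g1 g2 g3 h1 h4 h5 psi : ℝ)
    (hg1 : 0 < g1) (hg2 : 0 < g2) (hg3 : 0 < g3)
    (hh1 : h1 = min (g1 + g2) (min (g2 + g3) (g3 + g1)))
    (hh4 : h4 = max (g1 + g2) (max (g2 + g3) (g3 + g1)))
    (hh5 : h5 = min ((g1 + g2)^2) (min ((g2 + g3)^2) ((g3 + g1)^2)))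
    (hps0 : 0 < psi) (hps1 : psi < h1)
    (q00 q01 q02 q10 q11 q12 q20 q21 q22 : ℝ)
    (hrow0 : q00*q00 + q01*q01 + q02*q02 = 1)
    (hrow1 : q10*q10 + q11*q11 + q12*q12 = 1)
    (hrow2 : q20*q20 + q21*q21 + q22*q22 = 1)
    (hcol0 : q00*q00 + q10*q10 + q20*q20 = 1)
    (hcol1 : q01*q01 + q11*q11 + q21*q21 = 1)
    (hcol2 : q02*q02 + q12*q12 + q22*q22 = 1)
    (hcof0 : q00 = q11*q22 - q12*q21)
    (hcof1 : q11 = q00*q22 - q02*q20)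
    (hcof2 : q22 = q00*q11 - q01*q10)
    (hPP : (1/2*(g1*(1-q00)+g2*(1-q11)+g3*(1-q22))) < psi) :
    (1/2*(g1*(1-q00)+g2*(1-q11)+g3*(1-q22))) ≤ h1 * h4 / (h5 * (h1 - psi)) * ((1/2*(g3*q21-g2*q12))^2 + (1/2*(g1*q02-g3*q20))^2 + (1/2*(g2*q10-g1*q01))^2) := by
  have hcA1 : h1 ≤ g2 + g3 := by rw [hh1]; exact le_trans (min_le_right _ _) (min_le_left _ _)
  have hcB1 : h1 ≤ g3 + g1 := by rw [hh1]; exact le_trans (min_le_right _ _) (min_le_right _ _)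
  have hcC1 : h1 ≤ g1 + g2 := by rw [hh1]; exact min_le_left _ _
  have hcA4 : g2 + g3 ≤ h4 := by rw [hh4]; exact le_trans (le_max_left _ _) (le_max_right _ _)
  have hcB4 : g3 + g1 ≤ h4 := by rw [hh4]; exact le_trans (le_max_right _ _) (le_max_right _ _)
  have hcC4 : g1 + g2 ≤ h4 := by rw [hh4]; exact le_max_left _ _
  have hcA5 : h5 ≤ (g2 + g3)^2 := by rw [hh5]; exact le_trans (min_le_right _ _) (min_le_left _ _)
  have hcB5 : h5 ≤ (g3 + g1)^2 := by rw [hh5]; exact le_trans (min_le_right _ _) (min_le_right _ _)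
  have hcC5 : h5 ≤ (g1 + g2)^2 := by rw [hh5]; exact min_le_left _ _
  have hh1pos : 0 < h1 := by rw [hh1]; apply lt_min (by linarith) (lt_min (by linarith) (by linarith))
  have hh4pos : 0 < h4 := lt_of_lt_of_le (by linarith) hcA4
  have hh5pos : 0 < h5 := by rw [hh5]; exact lt_min (by positivity) (lt_min (by positivity) (by positivity))
  have hF1 : ((1 + q11 - q00 - q22)/2) * ((1 + q22 - q00 - q11)/2) = ((q21 + q12)/2)^2 := by
    linear_combination (-1/2)*hcof0 - (1/4)*hrow1 - (1/4)*hrow2 + (1/4)*hcol0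
  have hF2 : ((1 + q00 - q11 - q22)/2) * ((1 + q22 - q00 - q11)/2) = ((q02 + q20)/2)^2 := by
    linear_combination (-1/2)*hcof1 - (1/4)*hrow0 - (1/4)*hrow2 + (1/4)*hcol1
  have hF3 : ((1 + q00 - q11 - q22)/2) * ((1 + q11 - q00 - q22)/2) = ((q10 + q01)/2)^2 := by
    linear_combination (-1/2)*hcof2 - (1/4)*hrow0 - (1/4)*hrow1 + (1/4)*hcol2
  have hD1 : ((q02 - q20)/2) * ((q02 + q20)/2) = ((q21 - q12)/2) * ((q21 + q12)/2) := by
    linear_combination (1/4)*hcol2 - (1/4)*hrow2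
  have hD2 : ((q10 - q01)/2) * ((q10 + q01)/2) = ((q21 - q12)/2) * ((q21 + q12)/2) := by
    linear_combination (1/4)*hrow1 - (1/4)*hcol1
  have hEid : ((q21 - q12)/2)^2 + ((q02 - q20)/2)^2 + ((q10 - q01)/2)^2 = ((3 - q00 - q11 - q22)/2) * ((1 + q00 + q11 + q22)/2) := by
    linear_combination (1/4)*hrow0 + (1/4)*hrow1 + (1/4)*hrow2 - (1/2)*hcof0 - (1/2)*hcof1 - (1/2)*hcof2
  have hb00 : q00 ≤ 1 := le_one_of_sq _ _ _ hrow0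
  have hb11 : q11 ≤ 1 := le_one_of_sq q11 q10 q12 (by linarith [hrow1])
  have hb22 : q22 ≤ 1 := le_one_of_sq q22 q20 q21 (by linarith [hrow2])
  have hom : 0 ≤ ((3 - q00 - q11 - q22)/2) := by linarith
  have h12 : 0 ≤ ((1 + q00 - q11 - q22)/2) * ((1 + q11 - q00 - q22)/2) := by rw [hF3]; positivity
  have h13 : 0 ≤ ((1 + q00 - q11 - q22)/2) * ((1 + q22 - q00 - q11)/2) := by rw [hF2]; positivity
  have h23 : 0 ≤ ((1 + q11 - q00 - q22)/2) * ((1 + q22 - q00 - q11)/2) := by rw [hF1]; positivity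
  have hp1 : 0 ≤ ((1 + q00 - q11 - q22)/2) := nonneg_of_pairwise _ _ _ h12 h13 h23 (by linarith)
  have hp2 : 0 ≤ ((1 + q11 - q00 - q22)/2) := nonneg_of_pairwise ((1 + q11 - q00 - q22)/2) ((1 + q00 - q11 - q22)/2) ((1 + q22 - q00 - q11)/2) (by linarith [h12]) h23 h13 (by linarith)
  have hp3 : 0 ≤ ((1 + q22 - q00 - q11)/2) := nonneg_of_pairwise ((1 + q22 - q00 - q11)/2) ((1 + q00 - q11 - q22)/2) ((1 + q11 - q00 - q22)/2) (by linarith [h13]) (by linarith [h23]) h12 (by linarith)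
  have hPsiLow : h1 * ((3 - q00 - q11 - q22)/2) ≤ 2 * (1/2*(g1*(1-q00)+g2*(1-q11)+g3*(1-q22))) := by
    have idl : 2 * (1/2*(g1*(1-q00)+g2*(1-q11)+g3*(1-q22))) - h1 * ((3 - q00 - q11 - q22)/2) =
        (g2 + g3 - h1) * ((1 + q00 - q11 - q22)/2) + (g3 + g1 - h1) * ((1 + q11 - q00 - q22)/2) + (g1 + g2 - h1) * ((1 + q22 - q00 - q11)/2) := by ring
    linarith [idl, mul_nonneg (sub_nonneg.mpr hcA1) hp1, mul_nonneg (sub_nonneg.mpr hcB1) hp2,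
      mul_nonneg (sub_nonneg.mpr hcC1) hp3]
  have hPsiHigh : 2 * (1/2*(g1*(1-q00)+g2*(1-q11)+g3*(1-q22))) ≤ h4 * ((3 - q00 - q11 - q22)/2) := by
    have idh : h4 * ((3 - q00 - q11 - q22)/2) - 2 * (1/2*(g1*(1-q00)+g2*(1-q11)+g3*(1-q22))) =
        (h4 - (g2 + g3)) * ((1 + q00 - q11 - q22)/2) + (h4 - (g3 + g1)) * ((1 + q11 - q00 - q22)/2) + (h4 - (g1 + g2)) * ((1 + q22 - q00 - q11)/2) := by ring
    linarith [idh, mul_nonneg (sub_nonneg.mpr hcA4) hp1, mul_nonneg (sub_nonneg.mpr hcB4) hp2,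
      mul_nonneg (sub_nonneg.mpr hcC4) hp3]
  have homlt : h1 * ((3 - q00 - q11 - q22)/2) < 2 * psi := lt_of_le_of_lt hPsiLow (by linarith)
  have hopid : h1 * ((1 + q00 + q11 + q22)/2) = 2 * h1 - h1 * ((3 - q00 - q11 - q22)/2) := by ring
  have hop : 2 * (h1 - psi) < h1 * ((1 + q00 + q11 + q22)/2) := by linarith
  have hcross : (g2+g3)*(g3-g2)*(((q21 - q12)/2)*((q21 + q12)/2)) + (g3+g1)*(g1-g3)*(((q02 - q20)/2)*((q02 + q20)/2))
      + (g1+g2)*(g2-g1)*(((q10 - q01)/2)*((q10 + q01)/2)) = 0 := by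
    linear_combination ((g3+g1)*(g1-g3))*hD1 + ((g1+g2)*(g2-g1))*hD2
  have kid : 4 * ((1/2*(g3*q21-g2*q12))^2 + (1/2*(g1*q02-g3*q20))^2 + (1/2*(g2*q10-g1*q01))^2) - h5 * (((q21 - q12)/2)^2 + ((q02 - q20)/2)^2 + ((q10 - q01)/2)^2) =
      ((g2+g3)^2 - h5) * ((q21 - q12)/2)^2 + ((g3+g1)^2 - h5) * ((q02 - q20)/2)^2 + ((g1+g2)^2 - h5) * ((q10 - q01)/2)^2
      + ((g3-g2)*((q21 + q12)/2))^2 + ((g1-g3)*((q02 + q20)/2))^2 + ((g2-g1)*((q10 + q01)/2))^2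
      + 2*((g2+g3)*(g3-g2)*(((q21 - q12)/2)*((q21 + q12)/2)) + (g3+g1)*(g1-g3)*(((q02 - q20)/2)*((q02 + q20)/2))
        + (g1+g2)*(g2-g1)*(((q10 - q01)/2)*((q10 + q01)/2))) := by ring
  have key1 : h5 * (((3 - q00 - q11 - q22)/2) * ((1 + q00 + q11 + q22)/2)) ≤ 4 * ((1/2*(g3*q21-g2*q12))^2 + (1/2*(g1*q02-g3*q20))^2 + (1/2*(g2*q10-g1*q01))^2) := by
    rw [← hEid]
    linarith [kid, hcross,
      mul_nonneg (sub_nonneg.mpr hcA5) (sq_nonneg ((q21 - q12)/2)),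
      mul_nonneg (sub_nonneg.mpr hcB5) (sq_nonneg ((q02 - q20)/2)),
      mul_nonneg (sub_nonneg.mpr hcC5) (sq_nonneg ((q10 - q01)/2)),
      sq_nonneg ((g3-g2)*((q21 + q12)/2)), sq_nonneg ((g1-g3)*((q02 + q20)/2)), sq_nonneg ((g2-g1)*((q10 + q01)/2))]
  have hden : 0 < h5 * (h1 - psi) := mul_pos hh5pos (by linarith)
  have hre : h1 * h4 / (h5 * (h1 - psi)) * ((1/2*(g3*q21-g2*q12))^2 + (1/2*(g1*q02-g3*q20))^2 + (1/2*(g2*q10-g1*q01))^2) = h1 * h4 * ((1/2*(g3*q21-g2*q12))^2 + (1/2*(g1*q02-g3*q20))^2 + (1/2*(g2*q10-g1*q01))^2) / (h5 * (h1 - psi)) := by ring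
  rw [hre, le_div_iff₀ hden]
  have s1 : h1 * h4 * (h5 * (((3 - q00 - q11 - q22)/2) * ((1 + q00 + q11 + q22)/2))) ≤ h1 * h4 * (4 * ((1/2*(g3*q21-g2*q12))^2 + (1/2*(g1*q02-g3*q20))^2 + (1/2*(g2*q10-g1*q01))^2)) :=
    mul_le_mul_of_nonneg_left key1 (by positivity)
  have s2 : 4 * (1/2*(g1*(1-q00)+g2*(1-q11)+g3*(1-q22))) * (h1 - psi) ≤ 2 * h4 * ((3 - q00 - q11 - q22)/2) * (h1 - psi) := by
    have h := mul_le_mul_of_nonneg_right hPsiHigh (show (0:ℝ) ≤ h1 - psi by linarith)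
    linarith [h]
  have s3 : 2 * h4 * ((3 - q00 - q11 - q22)/2) * (h1 - psi) ≤ h4 * ((3 - q00 - q11 - q22)/2) * (h1 * ((1 + q00 + q11 + q22)/2)) := by
    have h := mul_le_mul_of_nonneg_left hop.le (mul_nonneg hh4pos.le hom)
    linarith [h]
  have s4 : 4 * (1/2*(g1*(1-q00)+g2*(1-q11)+g3*(1-q22))) * (h1 - psi) ≤ h4 * ((3 - q00 - q11 - q22)/2) * (h1 * ((1 + q00 + q11 + q22)/2)) := le_trans s2 s3
  have s5 : h5 * (4 * (1/2*(g1*(1-q00)+g2*(1-q11)+g3*(1-q22))) * (h1 - psi)) ≤ h5 * (h4 * ((3 - q00 - q11 - q22)/2) * (h1 * ((1 + q00 + q11 + q22)/2))) :=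
    mul_le_mul_of_nonneg_left s4 hh5pos.le
  linarith [s1, s5]


theorem stmt7 (g1 g2 g3 : ℝ) (hg1 : 0 < g1) (hg2 : 0 < g2) (hg3 : 0 < g3)
    (h12 : g1 ≠ g2) (h23 : g2 ≠ g3) (h31 : g3 ≠ g1)
    (h1 h4 h5 ψ b2 : ℝ)
    (hh1 : h1 = min (g1 + g2) (min (g2 + g3) (g3 + g1)))
    (hh4 : h4 = max (g1 + g2) (max (g2 + g3) (g3 + g1)))
    (hh5 : h5 = min ((g1 + g2)^2) (min ((g2 + g3)^2) ((g3 + g1)^2)))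
    (hψ0 : 0 < ψ) (hψ1 : ψ < h1)
    (hb2 : b2 = h1 * h4 / (h5 * (h1 - ψ)))
    (R Rd : Matrix (Fin 3) (Fin 3) ℝ) (hR : SO3 R) (hRd : SO3 Rd)
    (hPsi : Psi (Gmat g1 g2 g3) R Rd < ψ) :
    Psi (Gmat g1 g2 g3) R Rd ≤ b2 * (enorm3 (eRvec (Gmat g1 g2 g3) R Rd))^2 := by
  obtain ⟨hRo, hRdet⟩ := hR
  obtain ⟨hRdo, hRddet⟩ := hRd
  have hRd2 : Rd * Rdᵀ = 1 := mul_eq_one_comm.mp hRdo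
  obtain ⟨Q, hQdef⟩ : ∃ Q, Q = Rdᵀ * R := ⟨_, rfl⟩
  have hQT : Rᵀ * Rd = Qᵀ := by
    rw [hQdef, Matrix.transpose_mul, Matrix.transpose_transpose]
  have hQo : Qᵀ * Q = 1 := by
    rw [hQdef, Matrix.transpose_mul, Matrix.transpose_transpose, Matrix.mul_assoc,
      ← Matrix.mul_assoc Rd Rdᵀ R, hRd2, Matrix.one_mul, hRo]
  have hQ2 : Q * Qᵀ = 1 := mul_eq_one_comm.mp hQo
  have hQdet : Q.det = 1 := by
    rw [hQdef, Matrix.det_mul, Matrix.det_transpose, hRddet, hRdet, mul_one]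
  have hadj : Qᵀ = Q.adjugate := by
    have h := Matrix.adjugate_mul Q
    rw [hQdet, one_smul] at h
    calc Qᵀ = 1 * Qᵀ := (Matrix.one_mul _).symm
      _ = Q.adjugate * Q * Qᵀ := by rw [h]
      _ = Q.adjugate * (Q * Qᵀ) := Matrix.mul_assoc _ _ _
      _ = Q.adjugate := by rw [hQ2, Matrix.mul_one]
  have hrow0 : Q 0 0 * Q 0 0 + Q 0 1 * Q 0 1 + Q 0 2 * Q 0 2 = 1 := by
    simpa [Matrix.mul_apply, Fin.sum_univ_three, Matrix.one_apply] using
      congrFun (congrFun hQ2 0) 0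
  have hrow1 : Q 1 0 * Q 1 0 + Q 1 1 * Q 1 1 + Q 1 2 * Q 1 2 = 1 := by
    simpa [Matrix.mul_apply, Fin.sum_univ_three, Matrix.one_apply] using
      congrFun (congrFun hQ2 1) 1
  have hrow2 : Q 2 0 * Q 2 0 + Q 2 1 * Q 2 1 + Q 2 2 * Q 2 2 = 1 := by
    simpa [Matrix.mul_apply, Fin.sum_univ_three, Matrix.one_apply] using
      congrFun (congrFun hQ2 2) 2
  have hcol0 : Q 0 0 * Q 0 0 + Q 1 0 * Q 1 0 + Q 2 0 * Q 2 0 = 1 := by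
    simpa [Matrix.mul_apply, Fin.sum_univ_three, Matrix.one_apply] using
      congrFun (congrFun hQo 0) 0
  have hcol1 : Q 0 1 * Q 0 1 + Q 1 1 * Q 1 1 + Q 2 1 * Q 2 1 = 1 := by
    simpa [Matrix.mul_apply, Fin.sum_univ_three, Matrix.one_apply] using
      congrFun (congrFun hQo 1) 1
  have hcol2 : Q 0 2 * Q 0 2 + Q 1 2 * Q 1 2 + Q 2 2 * Q 2 2 = 1 := by
    simpa [Matrix.mul_apply, Fin.sum_univ_three, Matrix.one_apply] using
      congrFun (congrFun hQo 2) 2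
  have hcof0 : Q 0 0 = Q 1 1 * Q 2 2 - Q 1 2 * Q 2 1 := by
    have h := congrFun (congrFun hadj 0) 0
    rw [Matrix.adjugate_fin_three] at h
    simpa using h
  have hcof1 : Q 1 1 = Q 0 0 * Q 2 2 - Q 0 2 * Q 2 0 := by
    have h := congrFun (congrFun hadj 1) 1
    rw [Matrix.adjugate_fin_three] at h
    simpa using h
  have hcof2 : Q 2 2 = Q 0 0 * Q 1 1 - Q 0 1 * Q 1 0 := by
    have h := congrFun (congrFun hadj 2) 2
    rw [Matrix.adjugate_fin_three] at h
    simpa using h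
  have hPsiVal : Psi (Gmat g1 g2 g3) R Rd
      = 1/2*(g1*(1 - Q 0 0) + g2*(1 - Q 1 1) + g3*(1 - Q 2 2)) := by
    simp only [Psi, ← hQdef]
    rw [Matrix.trace_fin_three]
    simp [Gmat, Matrix.mul_apply, Fin.sum_univ_three, Matrix.diagonal, Matrix.one_apply,
      Matrix.sub_apply]
    try ring
  have hM : Gmat g1 g2 g3 * Rdᵀ * R - Rᵀ * Rd * Gmat g1 g2 g3
      = Gmat g1 g2 g3 * Q - Qᵀ * Gmat g1 g2 g3 := by
    rw [Matrix.mul_assoc, ← hQdef, hQT]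
  have hvec : eRvec (Gmat g1 g2 g3) R Rd
      = ![1/2*(g3 * Q 2 1 - g2 * Q 1 2), 1/2*(g1 * Q 0 2 - g3 * Q 2 0),
          1/2*(g2 * Q 1 0 - g1 * Q 0 1)] := by
    funext i
    simp only [eRvec, hM]
    fin_cases i <;>
      simp [vee, Gmat, Matrix.mul_apply, Fin.sum_univ_three, Matrix.diagonal,
        Matrix.sub_apply, Matrix.transpose_apply] <;> try ring
  have hEnorm : (enorm3 (eRvec (Gmat g1 g2 g3) R Rd))^2
      = (1/2*(g3 * Q 2 1 - g2 * Q 1 2))^2 + (1/2*(g1 * Q 0 2 - g3 * Q 2 0))^2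
        + (1/2*(g2 * Q 1 0 - g1 * Q 0 1))^2 := by
    rw [hvec]
    simp only [enorm3]
    have hdd : (![1/2*(g3 * Q 2 1 - g2 * Q 1 2), 1/2*(g1 * Q 0 2 - g3 * Q 2 0),
          1/2*(g2 * Q 1 0 - g1 * Q 0 1)] : Fin 3 → ℝ) ⬝ᵥ
        ![1/2*(g3 * Q 2 1 - g2 * Q 1 2), 1/2*(g1 * Q 0 2 - g3 * Q 2 0),
          1/2*(g2 * Q 1 0 - g1 * Q 0 1)]
        = (1/2*(g3 * Q 2 1 - g2 * Q 1 2))^2 + (1/2*(g1 * Q 0 2 - g3 * Q 2 0))^2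
          + (1/2*(g2 * Q 1 0 - g1 * Q 0 1))^2 := by
      simp [dotProduct, Fin.sum_univ_three]
      ring
    rw [hdd, Real.sq_sqrt (by positivity)]
  rw [hPsiVal] at hPsi ⊢
  rw [hEnorm, hb2]
  exact core g1 g2 g3 h1 h4 h5 ψ hg1 hg2 hg3 hh1 hh4 hh5 hψ0 hψ1
    (Q 0 0) (Q 0 1) (Q 0 2) (Q 1 0) (Q 1 1) (Q 1 2) (Q 2 0) (Q 2 1) (Q 2 2)
    hrow0 hrow1 hrow2 hcol0 hcol1 hcol2 hcof0 hcof1 hcof2 hPsi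
end
end

section
/- Under the kinematics Ṙ = RΩ̂, Ṙ_d = R_dΩ̂_d, with e_Ω = Ω - RᵀR_dΩ_d, G = diag(g1,g2,g3), Ψ = (1/2)tr(G(I - R_dᵀR)), and e_R = (1/2)(GR_dᵀR - RᵀR_dG)ᵛ, the derivative of the error function satisfies d/dt Ψ(R(t), R_d(t)) = e_R · e_Ω (the Euclidean inner product). -/
open Matrix
noncomputable section
lemma hat_conj_poly (A : Matrix (Fin 3) (Fin 3) ℝ) (y : Fin 3 → ℝ) :
    Aᵀ * hat (A.mulVec y) * A = A.det • hat y := by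
  ext i j
  fin_cases i <;> fin_cases j <;>
    simp [hat, Matrix.mul_apply, Matrix.mulVec, dotProduct,
      Matrix.det_fin_three, Fin.sum_univ_three] <;> ring

lemma trace_mul_hat (A : Matrix (Fin 3) (Fin 3) ℝ) (z : Fin 3 → ℝ) :
    (A * hat z).trace = -(vee (A - Aᵀ) ⬝ᵥ z) := by
  simp [hat, vee, Matrix.trace, Matrix.mul_apply, dotProduct,
    Fin.sum_univ_three, Matrix.diag]
  ring

lemma SO3_mul_transpose {Q : Matrix (Fin 3) (Fin 3) ℝ} (h : SO3 Q) : Q * Qᵀ = 1 := by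
  rw [mul_eq_one_comm]; exact h.1

lemma SO3_mul {Q P : Matrix (Fin 3) (Fin 3) ℝ} (hQ : SO3 Q) (hP : SO3 P) : SO3 (Q * P) := by
  constructor
  · rw [Matrix.transpose_mul, Matrix.mul_assoc, ← Matrix.mul_assoc Qᵀ, hQ.1, Matrix.one_mul, hP.1]
  · rw [Matrix.det_mul, hQ.2, hP.2, mul_one]

lemma SO3_transpose {Q : Matrix (Fin 3) (Fin 3) ℝ} (h : SO3 Q) : SO3 Qᵀ := by
  refine ⟨?_, by rw [Matrix.det_transpose, h.2]⟩
  rw [Matrix.transpose_transpose]; exact SO3_mul_transpose h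

lemma hat_mulVec {Q : Matrix (Fin 3) (Fin 3) ℝ} (h : SO3 Q) (y : Fin 3 → ℝ) :
    hat (Q.mulVec y) = Q * hat y * Qᵀ := by
  have h1 := hat_conj_poly Q y
  calc hat (Q.mulVec y) = (Q * Qᵀ) * hat (Q.mulVec y) * (Q * Qᵀ) := by
        rw [SO3_mul_transpose h, Matrix.one_mul, Matrix.mul_one]
    _ = Q * (Qᵀ * hat (Q.mulVec y) * Q) * Qᵀ := by
        simp only [Matrix.mul_assoc]
    _ = Q * hat y * Qᵀ := by rw [h1, h.2, one_smul]

set_option maxHeartbeats 2000000 in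
theorem stmt11 (g1 g2 g3 : ℝ) (hg1 : 0 < g1) (hg2 : 0 < g2) (hg3 : 0 < g3)
    (R Rd : ℝ → Matrix (Fin 3) (Fin 3) ℝ) (Ω Ωd : ℝ → Fin 3 → ℝ)
    (hSO : ∀ t, SO3 (R t)) (hSOd : ∀ t, SO3 (Rd t))
    (hR : ∀ t i j, HasDerivAt (fun s => R s i j) ((R t * hat (Ω t)) i j) t)
    (hRd : ∀ t i j, HasDerivAt (fun s => Rd s i j) ((Rd t * hat (Ωd t)) i j) t)
    (eΩ : ℝ → Fin 3 → ℝ)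
    (heΩ : ∀ t, eΩ t = Ω t - ((R t)ᵀ * Rd t).mulVec (Ωd t)) (t : ℝ) :
    HasDerivAt (fun s => Psi (Gmat g1 g2 g3) (R s) (Rd s))
      (eRvec (Gmat g1 g2 g3) (R t) (Rd t) ⬝ᵥ eΩ t) t := by
  set Gm := Gmat g1 g2 g3 with hGm
  set A := R t with hA
  set B := Rd t with hB
  -- the scalar form of (minus twice) Psi's variable part
  set f : ℝ → ℝ := fun s => ∑ k : Fin 3, ∑ m : Fin 3, ∑ l : Fin 3,
      Gm k l * Rd s m l * R s m k with hf
  set f' : ℝ := ∑ k : Fin 3, ∑ m : Fin 3, ∑ l : Fin 3,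
      (Gm k l * (Rd t * hat (Ωd t)) m l * R t m k
        + Gm k l * Rd t m l * (R t * hat (Ω t)) m k) with hf'
  have hfd : HasDerivAt f f' t := by
    apply HasDerivAt.fun_sum; intro k _
    apply HasDerivAt.fun_sum; intro m _
    apply HasDerivAt.fun_sum; intro l _
    have := (((hRd t m l).const_mul (Gm k l)).fun_mul (hR t m k))
    convert this using 1
  have hPsiEq : (fun s => Psi Gm (R s) (Rd s))
      = fun s => (1/2 : ℝ) * Gm.trace - (1/2 : ℝ) * f s := by
    funext s
    simp only [Psi, hf, Matrix.trace, Matrix.mul_apply, Matrix.diag,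
      Matrix.sub_apply, Matrix.one_apply, Matrix.mul_sub, Matrix.transpose_apply,
      Fin.sum_univ_three]
    simp
    ring
  rw [hPsiEq]
  have hder : HasDerivAt (fun s => (1/2 : ℝ) * Gm.trace - (1/2 : ℝ) * f s)
      (0 - (1/2 : ℝ) * f') t := (hasDerivAt_const t _).sub (hfd.const_mul _)
  convert hder using 1
  -- now the value identity
  set M : Matrix (Fin 3) (Fin 3) ℝ := Gm * Bᵀ * A with hM
  set Q : Matrix (Fin 3) (Fin 3) ℝ := Aᵀ * B with hQdef
  have hGsymm : Gmᵀ = Gm := by rw [hGm]; exact Matrix.diagonal_transpose _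
  have hMT : Mᵀ = Aᵀ * B * Gm := by
    rw [hM, Matrix.transpose_mul, Matrix.transpose_mul, hGsymm, Matrix.transpose_transpose, Matrix.mul_assoc]
  have heR : eRvec Gm A B = (1/2 : ℝ) • vee (M - Mᵀ) := by
    rw [eRvec, hMT, hM]
  have hQ : SO3 Q := SO3_mul (SO3_transpose (hSO t)) (hSOd t)
  have hMQ : M * Q = Gm := by
    rw [hM, hQdef]
    calc Gm * Bᵀ * A * (Aᵀ * B) = Gm * (Bᵀ * ((A * Aᵀ) * B)) := by
          simp only [Matrix.mul_assoc]
      _ = Gm := by rw [SO3_mul_transpose (hSO t), Matrix.one_mul, (hSOd t).1, Matrix.mul_one]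
  have hd1 : vee (M - Mᵀ) ⬝ᵥ Ω t = -(M * hat (Ω t)).trace := by
    rw [trace_mul_hat, neg_neg]
  have e1 : M * hat (Q.mulVec (Ωd t)) = Gm * hat (Ωd t) * Qᵀ := by
    rw [hat_mulVec hQ, ← Matrix.mul_assoc, ← Matrix.mul_assoc, hMQ]
  have hd2 : vee (M - Mᵀ) ⬝ᵥ Q.mulVec (Ωd t) = -(Gm * hat (Ωd t) * Qᵀ).trace := by
    rw [← e1, trace_mul_hat, neg_neg]
  have heΩ' : eΩ t = Ω t - Q.mulVec (Ωd t) := by rw [heΩ t, hQdef, hA, hB]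
  rw [heΩ', heR, smul_dotProduct, dotProduct_sub, hd1, hd2]
  rw [hf', hM, hQdef]
  simp [Matrix.trace, Matrix.mul_apply, Matrix.diag, Matrix.transpose_apply,
    Fin.sum_univ_three, hat]
  ring
end
end

section
/- For any R, R_d ∈ SO(3) and G = diag(g1,g2,g3) with positive g_i, the matrix E(R,R_d) = (1/2)(tr(RᵀR_dG)·I - RᵀR_dG) satisfies ‖E(R,R_d)‖ ≤ (1/√2)·tr(G), where ‖·‖ is the spectral norm. -/
open Matrix
noncomputable section
lemma frob_eq {m n : ℕ} (A : Matrix (Fin m) (Fin n) ℝ) :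
    (Aᵀ * A).trace = ∑ i, ∑ j, A i j ^ 2 := by
  rw [Finset.sum_comm]
  simp [Matrix.trace, Matrix.mul_apply, Matrix.diag, sq]

lemma spec_le_frob {m n : ℕ} (A : Matrix (Fin m) (Fin n) ℝ) : specNorm A ≤ frobNorm A := by
  have hnn : 0 ≤ frobNorm A := Real.sqrt_nonneg _
  apply ContinuousLinearMap.opNorm_le_bound _ hnn
  intro x
  rw [LinearMap.coe_toContinuousLinearMap']
  have hAx : toEuclideanLin A x = (WithLp.equiv 2 (Fin m → ℝ)).symm (A *ᵥ (WithLp.equiv 2 (Fin n → ℝ)) x) := rfl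
  rw [hAx]
  have hnorm : ∀ (k : ℕ) (y : Fin k → ℝ), ‖(WithLp.equiv 2 (Fin k → ℝ)).symm y‖ = Real.sqrt (∑ i, y i ^ 2) := by
    intro k y
    rw [EuclideanSpace.norm_eq]
    congr 1; apply Finset.sum_congr rfl; intro i _; simp [sq_abs]
  rw [hnorm]
  have hxnorm : ‖x‖ = Real.sqrt (∑ j, ((WithLp.equiv 2 (Fin n → ℝ)) x) j ^ 2) := by
    rw [EuclideanSpace.norm_eq]
    congr 1; apply Finset.sum_congr rfl; intro i _; simp [sq_abs]
  rw [hxnorm, frobNorm, frob_eq]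
  rw [← Real.sqrt_mul (by positivity)]
  apply Real.sqrt_le_sqrt
  set y := (WithLp.equiv 2 (Fin n → ℝ)) x
  calc ∑ i, (A *ᵥ y) i ^ 2 ≤ ∑ i, (∑ j, A i j ^ 2) * (∑ j, y j ^ 2) := by
        apply Finset.sum_le_sum
        intro i _
        have := Finset.sum_mul_sq_le_sq_mul_sq Finset.univ (fun j => A i j) y
        simpa [Matrix.mulVec, dotProduct] using this
    _ = (∑ i, ∑ j, A i j ^ 2) * (∑ j, y j ^ 2) := by rw [← Finset.sum_mul]

theorem stmt13 (g1 g2 g3 : ℝ) (hg1 : 0 < g1) (hg2 : 0 < g2) (hg3 : 0 < g3)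
    (R Rd : Matrix (Fin 3) (Fin 3) ℝ) (hR : SO3 R) (hRd : SO3 Rd) :
    specNorm (Emat (Gmat g1 g2 g3) R Rd) ≤ (1 / Real.sqrt 2) * (Gmat g1 g2 g3).trace := by
  set G : Matrix (Fin 3) (Fin 3) ℝ := Gmat g1 g2 g3 with hG
  set S : Matrix (Fin 3) (Fin 3) ℝ := Rᵀ * Rd with hSdef
  set M : Matrix (Fin 3) (Fin 3) ℝ := S * G with hMdef
  set t : ℝ := M.trace with htdef
  -- S is orthogonal
  have hRRT : R * Rᵀ = 1 := mul_eq_one_comm.mp hR.1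
  have hSS : Sᵀ * S = 1 := by
    rw [hSdef, transpose_mul, transpose_transpose]
    calc Rdᵀ * R * (Rᵀ * Rd) = Rdᵀ * (R * Rᵀ) * Rd := by noncomm_ring
      _ = 1 := by rw [hRRT, mul_one, hRd.1]
  -- column norm equations
  have hcol : ∀ i : Fin 3, S 0 i ^ 2 + S 1 i ^ 2 + S 2 i ^ 2 = 1 := by
    intro i
    have := congrFun (congrFun hSS i) i
    simpa [Matrix.mul_apply, Fin.sum_univ_three, Matrix.one_apply, sq] using this
  have hdiag : ∀ i : Fin 3, -1 ≤ S i i ∧ S i i ≤ 1 := by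
    intro i
    fin_cases i
    · show -1 ≤ S 0 0 ∧ S 0 0 ≤ 1
      have h := hcol 0
      constructor <;> nlinarith [sq_nonneg (S 1 0), sq_nonneg (S 2 0), sq_nonneg (S 0 0 - 1), sq_nonneg (S 0 0 + 1)]
    · show -1 ≤ S 1 1 ∧ S 1 1 ≤ 1
      have h := hcol 1
      constructor <;> nlinarith [sq_nonneg (S 0 1), sq_nonneg (S 2 1), sq_nonneg (S 1 1 - 1), sq_nonneg (S 1 1 + 1)]
    · show -1 ≤ S 2 2 ∧ S 2 2 ≤ 1
      have h := hcol 2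
      constructor <;> nlinarith [sq_nonneg (S 0 2), sq_nonneg (S 1 2), sq_nonneg (S 2 2 - 1), sq_nonneg (S 2 2 + 1)]
  -- trace of M
  have ht : t = S 0 0 * g1 + S 1 1 * g2 + S 2 2 * g3 := by
    rw [htdef, hMdef, hG]
    simp [Matrix.trace, Gmat, Matrix.mul_diagonal, Fin.sum_univ_three, Matrix.diag]
  -- trace of MᵀM
  have hGT : Gᵀ = G := by rw [hG]; simp [Gmat]
  have hMM : (Mᵀ * M).trace = g1 ^ 2 + g2 ^ 2 + g3 ^ 2 := by
    have : Mᵀ * M = G * G := by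
      rw [hMdef, transpose_mul, hGT]
      calc G * Sᵀ * (S * G) = G * (Sᵀ * S) * G := by noncomm_ring
        _ = G * G := by rw [hSS, mul_one]
    rw [this, hG]
    simp [Gmat, Matrix.diagonal_mul_diagonal, Matrix.trace_diagonal, Fin.sum_univ_three, sq]
  -- trace of EᵀE
  have hE : Emat G R Rd = (1/2 : ℝ) • (t • (1 : Matrix (Fin 3) (Fin 3) ℝ) - M) := by
    rw [Emat, htdef, hMdef, hSdef]
  have htrE : ((Emat G R Rd)ᵀ * Emat G R Rd).trace = (1/4) * (t ^ 2 + (Mᵀ * M).trace) := by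
    have hexp : (Emat G R Rd)ᵀ * Emat G R Rd =
        (1/4 : ℝ) • ((t * t) • (1 : Matrix (Fin 3) (Fin 3) ℝ) - t • M - t • Mᵀ + Mᵀ * M) := by
      rw [hE]
      simp only [transpose_smul, transpose_sub, transpose_smul, transpose_one]
      rw [Matrix.smul_mul, Matrix.mul_smul, smul_smul]
      rw [show ((1:ℝ)/2 * (1/2)) = 1/4 from by norm_num]
      congr 1
      simp only [sub_mul, Matrix.mul_sub, Matrix.smul_mul, Matrix.mul_smul, smul_smul,
        Matrix.mul_one, Matrix.one_mul]
      abel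
    rw [hexp]
    rw [Matrix.trace_smul, Matrix.trace_add, Matrix.trace_sub, Matrix.trace_sub,
      Matrix.trace_smul, Matrix.trace_smul, Matrix.trace_smul, Matrix.trace_one,
      Matrix.trace_transpose]
    simp only [smul_eq_mul, Fintype.card_fin, Nat.cast_ofNat, ← htdef]
    ring
  -- trace of G
  have htrG : G.trace = g1 + g2 + g3 := by
    rw [hG]; simp [Gmat, Matrix.trace_diagonal, Fin.sum_univ_three]
  -- bound t² ≤ (g1+g2+g3)²
  have hT1 : t ≤ g1 + g2 + g3 := by
    rw [ht]
    nlinarith [(hdiag 0).2, (hdiag 1).2, (hdiag 2).2]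
  have hT2 : -(g1 + g2 + g3) ≤ t := by
    rw [ht]
    nlinarith [(hdiag 0).1, (hdiag 1).1, (hdiag 2).1]
  have ht2 : t ^ 2 ≤ (g1 + g2 + g3) ^ 2 := by nlinarith [mul_nonneg (by linarith : (0:ℝ) ≤ g1+g2+g3 - t) (by linarith : (0:ℝ) ≤ g1+g2+g3 + t)]
  -- conclude
  calc specNorm (Emat G R Rd) ≤ frobNorm (Emat G R Rd) := spec_le_frob _
    _ = Real.sqrt ((1/4) * (t ^ 2 + (g1 ^ 2 + g2 ^ 2 + g3 ^ 2))) := by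
        rw [frobNorm, htrE, hMM]
    _ ≤ Real.sqrt ((1/2) * (g1 + g2 + g3) ^ 2) := by
        apply Real.sqrt_le_sqrt
        nlinarith [mul_pos hg1 hg2, mul_pos hg1 hg3, mul_pos hg2 hg3]
    _ = (1 / Real.sqrt 2) * G.trace := by
        rw [htrG, Real.sqrt_mul (by norm_num), Real.sqrt_sq (by linarith)]
        rw [show (1/2 : ℝ) = 2⁻¹ by norm_num, Real.sqrt_inv]
        rw [one_div]
end
end

section
/- For any R, R_d ∈ SO(3) and G = diag(g1,g2,g3), the Frobenius norm of E(R,R_d) = (1/2)(tr(RᵀR_dG)I - RᵀR_dG) satisfies ‖E‖_F = (1/2)·√(tr(G²) + tr(RᵀR_dG)²). -/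
open Matrix
noncomputable section
theorem stmt14 (g1 g2 g3 : ℝ)
    (R Rd : Matrix (Fin 3) (Fin 3) ℝ) (hR : SO3 R) (hRd : SO3 Rd) :
    frobNorm (Emat (Gmat g1 g2 g3) R Rd)
      = (1/2 : ℝ) * Real.sqrt ((Gmat g1 g2 g3 * Gmat g1 g2 g3).trace
          + ((Rᵀ * Rd * Gmat g1 g2 g3).trace)^2) := by
  obtain ⟨hR1, -⟩ := hR
  obtain ⟨hRd1, -⟩ := hRd
  have hRR : R * Rᵀ = 1 := mul_eq_one_comm.mp hR1
  set G := Gmat g1 g2 g3 with hG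
  have hGt : Gᵀ = G := by rw [hG]; exact Matrix.diagonal_transpose _
  set M := Rᵀ * Rd * G with hM
  set t := M.trace with ht
  have hMM : (Mᵀ * M).trace = (G * G).trace := by
    have h : Mᵀ * M = G * (Rdᵀ * (R * Rᵀ) * Rd) * G := by
      rw [hM]
      simp only [Matrix.transpose_mul, Matrix.transpose_transpose, hGt]
      noncomm_ring
    rw [h, hRR, Matrix.mul_one, hRd1, Matrix.mul_one]
  have hExp : (Emat G R Rd)ᵀ * Emat G R Rd
      = (1/4 : ℝ) • ((t^2) • (1 : Matrix (Fin 3) (Fin 3) ℝ) - t • M - t • Mᵀ + Mᵀ * M) := by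
    unfold Emat
    rw [← hM, ← ht]
    rw [Matrix.transpose_smul, Matrix.transpose_sub, Matrix.transpose_smul,
      Matrix.transpose_one, Matrix.smul_mul, Matrix.mul_smul, smul_smul]
    rw [sub_mul, mul_sub, mul_sub]
    ext i j
    simp [Matrix.smul_mul, Matrix.mul_smul, smul_smul, Matrix.sub_apply, Matrix.add_apply,
      Matrix.smul_apply]
    ring
  have hTr : ((Emat G R Rd)ᵀ * Emat G R Rd).trace = (1/4 : ℝ) * ((G*G).trace + t^2) := by
    rw [hExp, Matrix.trace_smul, Matrix.trace_add, Matrix.trace_sub, Matrix.trace_sub,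
      Matrix.trace_smul, Matrix.trace_smul, Matrix.trace_smul, Matrix.trace_one,
      Matrix.trace_transpose, hMM, ← ht]
    simp only [smul_eq_mul]
    have : (Fintype.card (Fin 3) : ℝ) = 3 := by simp
    rw [this]
    ring
  unfold frobNorm
  rw [hTr, Real.sqrt_mul (by norm_num : (0:ℝ) ≤ 1/4),
    show Real.sqrt (1/4) = 1/2 by
      rw [show (1/4 : ℝ) = (1/2)^2 by norm_num, Real.sqrt_sq (by norm_num)]]
end
end

section
/- For any e_A ∈ R^3, Δ ∈ R^3 with ‖Δ‖ ≤ δ for some δ > 0, and ε > 0, define v = -δ²e_A/(δ‖e_A‖ + ε). Then e_A·(Δ + v) ≤ ε. -/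
open Matrix
noncomputable section
theorem stmt17 (eA Δ : Fin 3 → ℝ) (δ ε : ℝ) (hδ : 0 < δ) (hε : 0 < ε)
    (hΔ : enorm3 Δ ≤ δ)
    (v : Fin 3 → ℝ) (hv : v = -((δ^2 / (δ * enorm3 eA + ε)) • eA)) :
    eA ⬝ᵥ (Δ + v) ≤ ε := by
  set a := enorm3 eA with ha
  set b := enorm3 Δ with hb
  have hdotA : eA ⬝ᵥ eA = a ^ 2 := by
    rw [ha, enorm3, Real.sq_sqrt (by simp only [dotProduct, Fin.sum_univ_three]; nlinarith [mul_self_nonneg (eA 0), mul_self_nonneg (eA 1), mul_self_nonneg (eA 2)])]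
  have hdotB : Δ ⬝ᵥ Δ = b ^ 2 := by
    rw [hb, enorm3, Real.sq_sqrt (by simp only [dotProduct, Fin.sum_univ_three]; nlinarith [mul_self_nonneg (Δ 0), mul_self_nonneg (Δ 1), mul_self_nonneg (Δ 2)])]
  have ha0 : 0 ≤ a := Real.sqrt_nonneg _
  have hb0 : 0 ≤ b := Real.sqrt_nonneg _
  have hcs : eA ⬝ᵥ Δ ≤ a * b := by
    have h2 : (eA ⬝ᵥ Δ) ^ 2 ≤ (a * b) ^ 2 := by
      have := hdotA; have := hdotB
      simp only [dotProduct, Fin.sum_univ_three] at hdotA hdotB ⊢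
      nlinarith [sq_nonneg (eA 0 * Δ 1 - eA 1 * Δ 0), sq_nonneg (eA 0 * Δ 2 - eA 2 * Δ 0),
        sq_nonneg (eA 1 * Δ 2 - eA 2 * Δ 1)]
    nlinarith [mul_nonneg ha0 hb0]
  have hden : 0 < δ * a + ε := by positivity
  have hdv : eA ⬝ᵥ v = -(δ ^ 2 / (δ * a + ε)) * a ^ 2 := by
    rw [hv, dotProduct_neg, dotProduct_smul, smul_eq_mul, hdotA]; ring
  have hkey : eA ⬝ᵥ (Δ + v) = eA ⬝ᵥ Δ + eA ⬝ᵥ v := dotProduct_add _ _ _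
  rw [hkey, hdv]
  have h1 : eA ⬝ᵥ Δ ≤ a * δ := le_trans hcs (by nlinarith)
  have h2 : a * δ - ε ≤ δ ^ 2 / (δ * a + ε) * a ^ 2 := by
    rw [div_mul_eq_mul_div, le_div_iff₀ hden]
    nlinarith
  linarith
end
end

section
/- Let J̃ be a symmetric 3×3 matrix, e_A, α_d, Ω ∈ R^3, and k_J > 0. If d/dt J̄ = (k_J/2)(-α_d e_Aᵀ - e_A α_dᵀ + ΩΩᵀê_A - ê_AΩΩᵀ) and J̃ = J - J̄ with J constant, then tr(J̃·(-α_d e_Aᵀ - Ω(e_A×Ω)ᵀ + (1/k_J)·d/dt J̃)) = 0. That is, the adaptive update law exactly cancels the inertia-estimation-error terms in the Lyapunov derivative. -/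
open Matrix
noncomputable section
theorem stmt19 (J : Matrix (Fin 3) (Fin 3) ℝ) (Jbar : ℝ → Matrix (Fin 3) (Fin 3) ℝ)
    (eA αd Ω : Fin 3 → ℝ) (kJ : ℝ) (hkJ : 0 < kJ) (t : ℝ)
    (hsym : (J - Jbar t)ᵀ = J - Jbar t)
    (hupd : ∀ i j, HasDerivAt (fun s => Jbar s i j)
      (((kJ/2 : ℝ) • (-(vecMulVec αd eA) - vecMulVec eA αd
        + vecMulVec Ω Ω * hat eA - hat eA * vecMulVec Ω Ω)) i j) t)
    (dJt : Matrix (Fin 3) (Fin 3) ℝ)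
    (hdJt : ∀ i j, HasDerivAt (fun s => (J - Jbar s) i j) (dJt i j) t) :
    ((J - Jbar t) * (-(vecMulVec αd eA) - vecMulVec Ω (crossProduct eA Ω)
      + kJ⁻¹ • dJt)).trace = 0 := by
  have hd : dJt = -((kJ/2 : ℝ) • (-(vecMulVec αd eA) - vecMulVec eA αd
      + vecMulVec Ω Ω * hat eA - hat eA * vecMulVec Ω Ω)) := by
    funext i j
    have h1 : HasDerivAt (fun s => (J - Jbar s) i j)
        (-(((kJ/2 : ℝ) • (-(vecMulVec αd eA) - vecMulVec eA αd
          + vecMulVec Ω Ω * hat eA - hat eA * vecMulVec Ω Ω)) i j)) t := by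
      simpa [Matrix.sub_apply] using (hupd i j).const_sub (J i j)
    have := (hdJt i j).unique h1
    simpa using this
  subst hd
  have hS : ∀ i j, (J - Jbar t) j i = (J - Jbar t) i j := by
    intro i j
    have := congrFun (congrFun hsym i) j
    simpa [Matrix.transpose_apply] using this
  have hk : kJ ≠ 0 := ne_of_gt hkJ
  obtain ⟨S, hSdef⟩ : ∃ S, J - Jbar t = S := ⟨_, rfl⟩
  rw [hSdef] at hS ⊢
  have h01 := hS 0 1
  have h02 := hS 0 2
  have h12 := hS 1 2
  simp only [Matrix.trace, Matrix.diag, Matrix.mul_apply, Fin.sum_univ_three,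
    Matrix.add_apply, Matrix.sub_apply, Matrix.neg_apply, Matrix.smul_apply,
    Matrix.vecMulVec_apply, hat, crossProduct, Matrix.cons_val', Matrix.cons_val_zero,
    Matrix.cons_val_one, Matrix.head_cons, Matrix.empty_val', Matrix.cons_val_fin_one,
    Matrix.head_fin_const, Matrix.cons_val_two, Matrix.tail_cons, smul_eq_mul,
    LinearMap.mk₂_apply, Pi.sub_apply, Pi.mul_apply, Matrix.of_apply]
  rw [h01, h02, h12]
  field_simp
  ring
end
end
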